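/- arXiv:0906.1162 — 6 statements merged into one kernel-verified Lean document; each statement's English description precedes it below -/
import Mathlib

section
/- Let 1 ≤ p < ∞ and let q satisfy 1/p + 1/q = 1. Let f ∈ L_p(ℝ), let (λ_i)_{i≥1} be a sequence of distinct real numbers, set f_i = f_(λ_i), and suppose there exist g_i ∈ L_q(ℝ) with ∫_ℝ f_i g_j = δ_{ij} for all i, j and sup_i ‖f_i‖_p · ‖g_i‖_q < ∞ (a bounded biorthogonal system). Then the sequence (λ_i) is uniformly discrete, i.e. inf{|λ_i − λ_j| : i ≠ j} > 0. -/
/-!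
Pairing `f_i - f_j` against `g_i` gives `1 ≤ ‖f_i - f_j‖_p ‖g_i‖_q` by Hölder, and
`‖f‖_p ‖g_i‖_q ≤ C`, so `‖f‖_p / C ≤ ‖f_i - f_j‖_p = ‖f_(λ_j - λ_i) - f‖_p`. Since translation is
continuous on `L_p` for `p < ∞`, the right-hand side tends to `0` as `λ_j - λ_i → 0`, while
`‖f‖_p > 0` because `⟨f_0, g_0⟩ = 1`.
-/

open MeasureTheory ENNReal Filter Topology

section Holder

variable {α : Type*} [MeasurableSpace α] {μ : Measure α} {p q : ℝ≥0∞}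
  [p.HolderConjugate q]

theorem abs_integral_mul_le_eLpNorm_mul_eLpNorm {F G : α → ℝ} (hF : MemLp F p μ)
    (hG : MemLp G q μ) :
    |∫ x, F x * G x ∂μ| ≤ (eLpNorm F p μ).toReal * (eLpNorm G q μ).toReal := by
  have hholder : eLpNorm (fun x => F x * G x) 1 μ ≤ eLpNorm F p μ * eLpNorm G q μ := by
    simpa using eLpNorm_le_eLpNorm_mul_eLpNorm'_of_norm hF.1 hG.1 (· * ·) 1
      (.of_forall fun x => by simp [norm_mul])
  have hmeas : AEStronglyMeasurable (fun x => F x * G x) μ := hF.1.mul hG.1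
  calc |∫ x, F x * G x ∂μ| ≤ ∫ x, ‖F x * G x‖ ∂μ :=
      (Real.norm_eq_abs _).symm.trans_le (norm_integral_le_integral_norm _)
    _ = (eLpNorm (fun x => F x * G x) 1 μ).toReal := by
      rw [integral_norm_eq_lintegral_enorm hmeas, eLpNorm_one_eq_lintegral_enorm]
    _ ≤ (eLpNorm F p μ * eLpNorm G q μ).toReal :=
      toReal_mono (mul_ne_top hF.eLpNorm_ne_top hG.eLpNorm_ne_top) hholder
    _ = _ := toReal_mul

theorem one_le_eLpNorm_mul_eLpNorm_of_integral_mul_eq_one {F G : α → ℝ} (hF : MemLp F p μ)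
    (hG : MemLp G q μ) (h : ∫ x, F x * G x ∂μ = 1) :
    1 ≤ (eLpNorm F p μ).toReal * (eLpNorm G q μ).toReal := by
  simpa [h] using abs_integral_mul_le_eLpNorm_mul_eLpNorm hF hG

theorem div_le_eLpNorm_sub_of_biorthogonal {ι : Type*} [DecidableEq ι] {F G : ι → α → ℝ}
    (hF : ∀ i, MemLp (F i) p μ) (hG : ∀ i, MemLp (G i) q μ)
    (hbi : ∀ i j, ∫ x, F i x * G j x ∂μ = if i = j then 1 else 0) {C : ℝ}
    (hC : ∀ i, (eLpNorm (F i) p μ).toReal * (eLpNorm (G i) q μ).toReal ≤ C) {i j : ι}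
    (hij : i ≠ j) :
    (eLpNorm (F i) p μ).toReal / C ≤ (eLpNorm (F i - F j) p μ).toReal := by
  have hsub : ∫ x, (F i - F j) x * G i x ∂μ = 1 := by
    simp only [Pi.sub_apply, sub_mul]
    rw [integral_sub (f := fun x => F i x * G i x) (g := fun x => F j x * G i x)
      ((hF i).integrable_mul (hG i)) ((hF j).integrable_mul (hG i)), hbi, hbi, if_pos rfl,
      if_neg hij.symm, sub_zero]
  have hsep := one_le_eLpNorm_mul_eLpNorm_of_integral_mul_eq_one ((hF i).sub (hF j)) (hG i) hsub
  have hdiag := one_le_eLpNorm_mul_eLpNorm_of_integral_mul_eq_one (hF i) (hG i) (by simp [hbi])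
  set a := (eLpNorm (F i) p μ).toReal
  set d := (eLpNorm (F i - F j) p μ).toReal
  set b := (eLpNorm (G i) q μ).toReal
  rw [div_le_iff₀ (one_pos.trans_le (hdiag.trans (hC i)))]
  calc a ≤ a * (d * b) := le_mul_of_one_le_right toReal_nonneg hsep
    _ = d * (a * b) := by ring
    _ ≤ d * C := mul_le_mul_of_nonneg_left (hC i) toReal_nonneg

end Holder

section Translation

variable {G E : Type*} [NormedAddCommGroup E] [MeasurableSpace G] {μ : Measure G} {p : ℝ≥0∞}

theorem tendsto_eLpNorm_comp_add_sub_nhds_zero [AddGroup G] [TopologicalSpace G]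
    [IsTopologicalAddGroup G] [BorelSpace G] [μ.IsAddLeftInvariant]
    [IsLocallyFiniteMeasure μ] [μ.InnerRegularCompactLTTop] [Fact (1 ≤ p)] (hp : p ≠ ∞)
    {f : G → E} (hf : MemLp f p μ) :
    Tendsto (fun s => eLpNorm (fun t => f (s + t) - f t) p μ) (𝓝 0) (𝓝 0) := by
  have : Fact (p ≠ ∞) := ⟨hp⟩
  have hcont : Tendsto (fun s : G => DomAddAct.mk s +ᵥ hf.toLp f) (𝓝 0) (𝓝 (hf.toLp f)) := by
    have : Continuous fun s : G => DomAddAct.mk s +ᵥ hf.toLp f :=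
      DomAddAct.continuous_mk.vadd continuous_const
    simpa using this.tendsto 0
  refine ((Lp.tendsto_Lp_iff_tendsto_eLpNorm' _ _).1 hcont).congr fun s => eLpNorm_congr_ae ?_
  filter_upwards [DomAddAct.vadd_Lp_ae_eq (DomAddAct.mk s) (hf.toLp f), hf.coeFn_toLp,
    (measurePreserving_add_left μ s).quasiMeasurePreserving.ae_eq_comp hf.coeFn_toLp]
    with t h₁ h₂ h₃
  simp_all

theorem eLpNorm_comp_sub_sub_comp_sub [AddCommGroup G] [MeasurableAdd G]
    [μ.IsAddRightInvariant] (f : G → E) (a b : G) :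
    eLpNorm (fun t => f (t - a) - f (t - b)) p μ =
      eLpNorm (fun t => f (b - a + t) - f t) p μ := by
  have h := (measurableEmbedding_subRight b).eLpNorm_map_measure
    (g := fun t => f (b - a + t) - f t) (μ := μ) (p := p)
  rw [map_sub_right_eq_self] at h
  rw [h]
  congr 1 with t
  simp

end Translation

theorem translates_bounded_biorthogonal_uniformly_discrete_general
    (p q : ℝ≥0∞) [Fact (1 ≤ p)] [Fact (1 ≤ q)] (hp' : p ≠ ∞)
    (hpq : p⁻¹ + q⁻¹ = 1)
    (f : Lp ℝ p (volume : Measure ℝ))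
    (lam : ℕ → ℝ)
    (g : ℕ → Lp ℝ q (volume : Measure ℝ))
    (hbi : ∀ i j : ℕ, (∫ t : ℝ, f (t - lam i) * g j t) = if i = j then (1 : ℝ) else 0)
    (hbd : ∃ C : ℝ, ∀ i : ℕ,
      (eLpNorm (fun t : ℝ => f (t - lam i)) p volume).toReal * ‖g i‖ ≤ C) :
    ∃ δ > (0 : ℝ), ∀ i j : ℕ, i ≠ j → δ ≤ |lam i - lam j| := by
  have : p.HolderConjugate q := ⟨by simpa using hpq⟩
  obtain ⟨C, hC⟩ := hbd
  set F : ℕ → ℝ → ℝ := fun i t => f (t - lam i)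
  have hF i : MemLp (F i) p volume :=
    (Lp.memLp f).comp_measurePreserving (measurePreserving_sub_right volume (lam i))
  have hFnorm i : eLpNorm (F i) p volume = eLpNorm f p volume :=
    eLpNorm_comp_measurePreserving (Lp.aestronglyMeasurable f)
      (measurePreserving_sub_right volume (lam i))
  have hG i : MemLp (g i) q volume := Lp.memLp (g i)
  have hdiag : 1 ≤ (eLpNorm f p volume).toReal * ‖g 0‖ :=
    hFnorm 0 ▸ one_le_eLpNorm_mul_eLpNorm_of_integral_mul_eq_one (hF 0) (hG 0) (by simp [F, hbi])
  have hε : 0 < (eLpNorm f p volume).toReal / C :=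
    div_pos (pos_of_mul_pos_left (one_pos.trans_le hdiag) (norm_nonneg _))
      (one_pos.trans_le (hdiag.trans (hFnorm 0 ▸ hC 0)))
  obtain ⟨δ, hδ, hclose⟩ := Metric.eventually_nhds_iff.1 <|
    (tendsto_eLpNorm_comp_add_sub_nhds_zero hp' (Lp.memLp f)).eventually
      (gt_mem_nhds (ofReal_pos.2 hε))
  refine ⟨δ, hδ, fun i j hij => le_of_not_gt fun hlt => ?_⟩
  have hsep := div_le_eLpNorm_sub_of_biorthogonal hF hG hbi hC hij
  rw [hFnorm, show F i - F j = fun t => f (t - lam i) - f (t - lam j) from rfl,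
    eLpNorm_comp_sub_sub_comp_sub] at hsep
  have hsmall : eLpNorm (fun t => f (lam j - lam i + t) - f t) p volume < _ :=
    hclose (by rwa [Real.dist_eq, sub_zero, abs_sub_comm])
  exact (hsep.trans_lt (toReal_lt_of_lt_ofReal hsmall)).false

/-- If `(f_(λ_i), g_i)` is a bounded biorthogonal system in `L_p(ℝ) × L_q(ℝ)`
(`1 ≤ p < ∞`, `1/p + 1/q = 1`), where the `λ_i` are distinct, then `(λ_i)` is
uniformly discrete. -/
theorem translates_bounded_biorthogonal_uniformly_discrete
    (p q : ℝ≥0∞) [Fact (1 ≤ p)] [Fact (1 ≤ q)] (hp : 1 ≤ p) (hp' : p ≠ ∞)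
    (hpq : p⁻¹ + q⁻¹ = 1)
    (f : Lp ℝ p (volume : Measure ℝ))
    (lam : ℕ → ℝ) (hlam : Function.Injective lam)
    (g : ℕ → Lp ℝ q (volume : Measure ℝ))
    (hbi : ∀ i j : ℕ, (∫ t : ℝ, f (t - lam i) * g j t) = if i = j then (1 : ℝ) else 0)
    (hbd : ∃ C : ℝ, ∀ i : ℕ,
      (eLpNorm (fun t : ℝ => f (t - lam i)) p volume).toReal * ‖g i‖ ≤ C) :
    ∃ δ > (0 : ℝ), ∀ i j : ℕ, i ≠ j → δ ≤ |lam i - lam j| :=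
  translates_bounded_biorthogonal_uniformly_discrete_general p q hp' hpq f lam g hbi hbd
end

section
/- Let 1 < p < ∞ with conjugate exponent q (1/p + 1/q = 1). Let f ∈ L_p(ℝ) ∩ L_1(ℝ), let (λ_i)_{i≥1} be uniformly discrete, and set f_i = f_(λ_i). Then there is no sequence (g_i)_{i≥1} ⊆ L_q(ℝ) such that (f_i, g_i)_{i≥1} is a Schauder frame for the whole space L_p(ℝ), i.e. such that every h ∈ L_p(ℝ) satisfies h = Σ_{i=1}^∞ ⟨h, g_i⟩ f_i with convergence in the L_p norm. -/
/-!
If the translates `fᵢ = f(· - λᵢ)` carried a Schauder frame `(fᵢ, gᵢ)`, Banach–Steinhaus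
would bound the partial-sum operators by some `C`, hence `|⟨h, gᵢ⟩| ‖f‖_p ≤ 2C ‖h‖_p`.
Expanding `u_t = 1_(t, t+ε]` and testing against `u_t` gives
`ε = limₙ ∑_{i<n} (∫_t^{t+ε} gᵢ) (∫_t^{t+ε} fᵢ)`, so averaging over `t ∈ (0, δ]` (dominated
convergence) yields `δ ε`. By the coefficient bound `|∫_t^{t+ε} gᵢ| ‖f‖_p ≤ 2C ε^{1/p}`, and
since the intervals `(-λᵢ, δ - λᵢ]` are disjoint, the averages of `|∫_t^{t+ε} fᵢ|` sum to at
most `∫ (∫_r^{r+ε} |f|) dr = ε ‖f‖₁`. Thus `δ ‖f‖_p ≤ 2C ‖f‖₁ ε^{1/p}` for all `ε > 0`, so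
`f = 0`, and translates of `0` cannot reconstruct a nonzero function.
-/

open MeasureTheory ENNReal Filter Topology Set Function
open scoped Convolution

theorem intervalIntegral_add_eq_convolution {f : ℝ → ℝ} {ε : ℝ} (hε : 0 ≤ ε) :
    (fun t => ∫ x in t..t + ε, f x)
      = f ⋆[ContinuousLinearMap.mul ℝ ℝ, volume] (Ico (-ε) 0).indicator 1 := by
  ext t
  rw [convolution_mul, intervalIntegral.integral_of_le (by linarith),
    ← integral_indicator measurableSet_Ioc]
  congr 1 with x
  have hmem : t - x ∈ Ico (-ε) 0 ↔ x ∈ Ioc t (t + ε) := by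
    simp only [mem_Ico, mem_Ioc]
    constructor <;> rintro ⟨h₁, h₂⟩ <;> constructor <;> linarith
  simp only [indicator_apply, hmem, Pi.one_apply, mul_ite, mul_one, mul_zero]

theorem integrable_indicator_Ico_one (a b : ℝ) :
    Integrable ((Ico a b).indicator (1 : ℝ → ℝ)) :=
  (integrableOn_const (C := (1 : ℝ)) measure_Ico_lt_top.ne).integrable_indicator
    measurableSet_Ico

namespace MeasureTheory

theorem Integrable.integrable_intervalIntegral_add {f : ℝ → ℝ} (hf : Integrable f) {ε : ℝ}
    (hε : 0 ≤ ε) : Integrable fun t => ∫ x in t..t + ε, f x := by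
  rw [intervalIntegral_add_eq_convolution hε]
  exact hf.integrable_convolution _ (integrable_indicator_Ico_one _ _)

theorem Integrable.integral_intervalIntegral_add {f : ℝ → ℝ} (hf : Integrable f) {ε : ℝ}
    (hε : 0 ≤ ε) : ∫ t, ∫ x in t..t + ε, f x = ε * ∫ x, f x := by
  rw [intervalIntegral_add_eq_convolution hε,
    integral_convolution _ hf (integrable_indicator_Ico_one _ _),
    ContinuousLinearMap.mul_apply', integral_indicator_one measurableSet_Ico,
    Real.volume_real_Ico_of_le (by linarith), mul_comm, zero_sub, neg_neg]

theorem LocallyIntegrable.continuous_intervalIntegral_add {E : Type*} [NormedAddCommGroup E]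
    [NormedSpace ℝ E] {f : ℝ → E} (hf : LocallyIntegrable f) (ε : ℝ) :
    Continuous fun t => ∫ x in t..t + ε, f x := by
  have hii (a b : ℝ) : IntervalIntegrable f volume a b :=
    (hf.integrableOn_isCompact isCompact_uIcc).intervalIntegrable
  have hdiff : (fun t => ∫ x in t..t + ε, f x)
      = fun t => (∫ x in 0..t + ε, f x) - ∫ x in 0..t, f x :=
    funext fun t => (intervalIntegral.integral_interval_sub_left (hii 0 _) (hii 0 _)).symm
  rw [hdiff]
  exact ((intervalIntegral.continuous_primitive hii 0).comp (continuous_add_const ε)).sub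
    (intervalIntegral.continuous_primitive hii 0)

theorem Lp.continuous_intervalIntegral_add {E : Type*} [NormedAddCommGroup E]
    [NormedSpace ℝ E] {p : ℝ≥0∞} [Fact (1 ≤ p)] (f : Lp E p (volume : Measure ℝ)) (ε : ℝ) :
    Continuous fun t => ∫ x in t..t + ε, f x :=
  ((Lp.memLp f).locallyIntegrable Fact.out).continuous_intervalIntegral_add ε

theorem Lp.norm_eq_of_ae_eq_comp_sub {G E : Type*} [MeasurableSpace G] [AddGroup G]
    [MeasurableAdd G] {μ : Measure G} [μ.IsAddRightInvariant] [NormedAddCommGroup E]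
    {p : ℝ≥0∞} {F f : Lp E p μ} {c : G} (h : F =ᵐ[μ] fun x => f (x - c)) : ‖F‖ = ‖f‖ := by
  rw [Lp.norm_def, Lp.norm_def, eLpNorm_congr_ae h]
  exact congrArg _ (eLpNorm_comp_measurePreserving (Lp.aestronglyMeasurable f)
    (measurePreserving_sub_right μ c))

theorem Lp.nontrivial_of_measure_ne_zero {α : Type*} [MeasurableSpace α] {μ : Measure α}
    {p : ℝ≥0∞} (hp : p ≠ 0) {s : Set α} (hs : MeasurableSet s) (hμs : μ s ≠ ∞)
    (hμs0 : μ s ≠ 0) : Nontrivial (Lp ℝ p μ) := by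
  refine ⟨indicatorConstLp p hs hμs 1, 0, fun h => ?_⟩
  have hnorm := norm_indicatorConstLp' (c := (1 : ℝ)) hp hμs0 (hs := hs) (hμs := hμs)
  rw [h, Lp.norm_zero, norm_one, one_mul] at hnorm
  exact (Real.rpow_pos_of_pos (ENNReal.toReal_pos hμs0 hμs) _).ne' hnorm.symm

theorem norm_indicatorConstLp_Ioc_add_le (p : ℝ≥0∞) {t ε : ℝ} (hε : 0 ≤ ε)
    (hμ : volume (Ioc t (t + ε)) ≠ ∞) :
    ‖indicatorConstLp p measurableSet_Ioc hμ (1 : ℝ)‖ ≤ ε ^ (1 / p.toReal) :=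
  norm_indicatorConstLp_le.trans_eq (by
    rw [norm_one, one_mul, Real.volume_real_Ioc_of_le (by linarith), add_sub_cancel_left])

end MeasureTheory

theorem intervalIntegral_eq_of_ae_eq_comp_sub {E : Type*} [NormedAddCommGroup E]
    [NormedSpace ℝ E] {F f : ℝ → E} {c : ℝ} (h : F =ᵐ[volume] fun x => f (x - c)) (a b : ℝ) :
    ∫ x in a..b, F x = ∫ x in a - c..b - c, f x :=
  (intervalIntegral.integral_congr_ae (h.mono fun _ hx _ => hx)).trans
    (intervalIntegral.integral_comp_sub_right f c)

theorem setIntegral_Ioc_comp_sub {E : Type*} [NormedAddCommGroup E] [NormedSpace ℝ E]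
    (f : ℝ → E) (a b c : ℝ) :
    ∫ t in Ioc a b, f (t - c) = ∫ t in Ioc (a - c) (b - c), f t := by
  have := (measurePreserving_sub_right volume c).setIntegral_preimage_emb
    (measurableEmbedding_subRight c) f (Ioc (a - c) (b - c))
  simpa [preimage_sub_const_Ioc] using this

theorem sum_setIntegral_Ioc_le_integral {ι : Type*} {ψ : ℝ → ℝ} (hψ : Integrable ψ)
    (hψ0 : 0 ≤ ψ) {δ : ℝ} {y : ι → ℝ} (hsep : ∀ i j, i ≠ j → δ ≤ |y i - y j|)
    (s : Finset ι) : ∑ i ∈ s, ∫ t in Ioc (y i) (y i + δ), ψ t ≤ ∫ t, ψ t := by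
  have hdisj : (s : Set ι).Pairwise (Disjoint on fun i => Ioc (y i) (y i + δ)) := by
    intro i _ j _ hij
    refine disjoint_left.2 fun t ⟨hi₁, hi₂⟩ ⟨hj₁, hj₂⟩ => ?_
    have := hsep i j hij
    rw [abs_sub_comm, le_abs] at this
    rcases this with h | h <;> linarith
  rw [← integral_biUnion_finset s (fun _ _ => measurableSet_Ioc) hdisj
    (fun _ _ => hψ.integrableOn)]
  exact setIntegral_le_integral hψ (Eventually.of_forall hψ0)

theorem integral_Ioc_sum_le_integral_of_le_comp_sub {ι : Type*} {ψ : ℝ → ℝ}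
    (hψ : Integrable ψ) (hψ0 : 0 ≤ ψ) {δ : ℝ} {x : ι → ℝ}
    (hsep : ∀ i j, i ≠ j → δ ≤ |x i - x j|) (s : Finset ι) {u : ι → ℝ → ℝ}
    (hu : ∀ i, IntegrableOn (u i) (Ioc 0 δ)) (hle : ∀ i t, u i t ≤ ψ (t - x i)) :
    ∫ t in Ioc 0 δ, ∑ i ∈ s, u i t ≤ ∫ t, ψ t :=
  calc ∫ t in Ioc 0 δ, ∑ i ∈ s, u i t
      ≤ ∫ t in Ioc 0 δ, ∑ i ∈ s, ψ (t - x i) :=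
        setIntegral_mono (integrable_finsetSum _ fun i _ => hu i)
          (integrable_finsetSum _ fun i _ => (hψ.comp_sub_right (x i)).integrableOn)
          fun t => Finset.sum_le_sum fun i _ => hle i t
    _ = ∑ i ∈ s, ∫ t in Ioc (-x i) (-x i + δ), ψ t := by
        rw [integral_finsetSum _ fun i _ => (hψ.comp_sub_right (x i)).integrableOn]
        refine Finset.sum_congr rfl fun i _ => ?_
        rw [setIntegral_Ioc_comp_sub, zero_sub, sub_eq_neg_add]
    _ ≤ ∫ t, ψ t := sum_setIntegral_Ioc_le_integral hψ hψ0
        (fun i j hij => by simpa only [neg_sub_neg, abs_sub_comm] using hsep i j hij) s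

theorem nonpos_of_forall_le_mul_rpow {a b r : ℝ} (hr : 0 < r) (h : ∀ ε > 0, a ≤ b * ε ^ r) :
    a ≤ 0 := by
  have hlim : Tendsto (fun ε : ℝ => b * ε ^ r) (𝓝[>] 0) (𝓝 0) := by
    simpa [Real.zero_rpow hr.ne'] using
      (((Real.continuous_rpow_const hr.le).tendsto 0).const_mul b).mono_left nhdsWithin_le_nhds
  exact ge_of_tendsto hlim (eventually_nhdsWithin_of_forall h)

section Frame

variable {𝕜 E : Type*} [NontriviallyNormedField 𝕜] [NormedAddCommGroup E] [NormedSpace 𝕜 E]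

theorem exists_norm_sum_range_smul_le_of_tendsto [CompleteSpace E] {c : ℕ → StrongDual 𝕜 E}
    {x : ℕ → E} (hc : ∀ y, Tendsto (fun n => ∑ i ∈ Finset.range n, c i y • x i) atTop (𝓝 y)) :
    ∃ C, 0 ≤ C ∧ ∀ n y, ‖∑ i ∈ Finset.range n, c i y • x i‖ ≤ C * ‖y‖ := by
  let S : ℕ → E →L[𝕜] E := fun n => ∑ i ∈ Finset.range n, (c i).smulRight (x i)
  have hS (n : ℕ) (y : E) : S n y = ∑ i ∈ Finset.range n, c i y • x i := by simp [S]
  obtain ⟨C, hC⟩ := banach_steinhaus (g := S) fun y => by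
    obtain ⟨C, hC⟩ := (hc y).norm.bddAbove_range
    exact ⟨C, fun n => by simpa only [hS] using hC ⟨n, rfl⟩⟩
  refine ⟨C, (norm_nonneg _).trans (hC 0), fun n y => ?_⟩
  rw [← hS]
  exact (S n).le_of_opNorm_le (hC n) y

theorem norm_mul_norm_le_of_norm_sum_range_smul_le {c : ℕ → E → 𝕜} {x : ℕ → E} {C : ℝ}
    (hC : ∀ n y, ‖∑ i ∈ Finset.range n, c i y • x i‖ ≤ C * ‖y‖) (i : ℕ) (y : E) :
    ‖c i y‖ * ‖x i‖ ≤ 2 * C * ‖y‖ := by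
  rw [← norm_smul]
  calc ‖c i y • x i‖
      = ‖∑ j ∈ Finset.range (i + 1), c j y • x j - ∑ j ∈ Finset.range i, c j y • x j‖ := by
        rw [Finset.sum_range_succ, add_sub_cancel_left]
    _ ≤ C * ‖y‖ + C * ‖y‖ := (norm_sub_le _ _).trans (add_le_add (hC _ _) (hC _ _))
    _ = 2 * C * ‖y‖ := by ring

end Frame

section Pairing

variable {α : Type*} [MeasurableSpace α] {μ : Measure α} {p q : ℝ≥0∞} [Fact (1 ≤ p)]
  [Fact (1 ≤ q)] [p.HolderConjugate q] {s : Set α} (hs : MeasurableSet s) (hμs : μ s ≠ ∞)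

theorem lpPairing_mul_indicatorConstLp_left (g : Lp ℝ q μ) :
    (ContinuousLinearMap.mul ℝ ℝ).lpPairing μ p q (indicatorConstLp p hs hμs 1) g
      = ∫ x in s, g x ∂μ := by
  rw [ContinuousLinearMap.lpPairing_eq_integral, ← integral_indicator hs]
  refine integral_congr_ae ?_
  filter_upwards [indicatorConstLp_coeFn (p := p) (hs := hs) (hμs := hμs) (c := (1 : ℝ))]
    with x hx
  by_cases hxs : x ∈ s <;> simp [hx, hxs]

theorem lpPairing_mul_indicatorConstLp_right (h : Lp ℝ p μ) :
    (ContinuousLinearMap.mul ℝ ℝ).lpPairing μ p q h (indicatorConstLp q hs hμs 1)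
      = ∫ x in s, h x ∂μ := by
  rw [ContinuousLinearMap.lpPairing_eq_integral, ← integral_indicator hs]
  refine integral_congr_ae ?_
  filter_upwards [indicatorConstLp_coeFn (p := q) (hs := hs) (hμs := hμs) (c := (1 : ℝ))]
    with x hx
  by_cases hxs : x ∈ s <;> simp [hx, hxs]

end Pairing

section Translates

variable {p q : ℝ≥0∞} [Fact (1 ≤ p)] [Fact (1 ≤ q)] [p.HolderConjugate q]

theorem tendsto_integral_sum_intervalIntegral_mul_of_tendsto
    {F : ℕ → Lp ℝ p (volume : Measure ℝ)} {g : ℕ → Lp ℝ q (volume : Measure ℝ)}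
    (hfr : ∀ h, Tendsto (fun n => ∑ i ∈ Finset.range n,
      (ContinuousLinearMap.mul ℝ ℝ).lpPairing volume p q h (g i) • F i) atTop (𝓝 h))
    {C : ℝ} (hC0 : 0 ≤ C) (hC : ∀ n h, ‖∑ i ∈ Finset.range n,
      (ContinuousLinearMap.mul ℝ ℝ).lpPairing volume p q h (g i) • F i‖ ≤ C * ‖h‖)
    {ε : ℝ} (hε : 0 ≤ ε) {a b : ℝ} (hab : a ≤ b) :
    Tendsto (fun n => ∫ t in Ioc a b, ∑ i ∈ Finset.range n,
      (∫ x in t..t + ε, g i x) * ∫ x in t..t + ε, F i x) atTop (𝓝 ((b - a) * ε)) := by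
  set P := (ContinuousLinearMap.mul ℝ ℝ).lpPairing (volume : Measure ℝ) p q
  set Q : ℕ → ℝ → ℝ := fun n t => ∑ i ∈ Finset.range n,
    (∫ x in t..t + ε, g i x) * ∫ x in t..t + ε, F i x
  have hvol (t : ℝ) : volume (Ioc t (t + ε)) ≠ ∞ := measure_Ioc_lt_top.ne
  set u : ℝ → Lp ℝ p (volume : Measure ℝ) :=
    fun t => indicatorConstLp p measurableSet_Ioc (hvol t) 1
  set v : ℝ → Lp ℝ q (volume : Measure ℝ) :=
    fun t => indicatorConstLp q measurableSet_Ioc (hvol t) 1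
  have hwin (t : ℝ) (w : ℝ → ℝ) : ∫ x in Ioc t (t + ε), w x = ∫ x in t..t + ε, w x :=
    (intervalIntegral.integral_of_le (by linarith)).symm
  have hQ (n : ℕ) (t : ℝ) :
      Q n t = P (∑ i ∈ Finset.range n, P (u t) (g i) • F i) (v t) := by
    simp only [Q, P, u, v, map_sum, map_smul, FunLike.coe_sum, Finset.sum_apply,
      FunLike.coe_smul, Pi.smul_apply, smul_eq_mul, lpPairing_mul_indicatorConstLp_left,
      lpPairing_mul_indicatorConstLp_right, hwin]
  have hlim (t : ℝ) : Tendsto (fun n => Q n t) atTop (𝓝 ε) := by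
    have huv : P (u t) (v t) = ε := by
      rw [lpPairing_mul_indicatorConstLp_right, setIntegral_indicatorConstLp measurableSet_Ioc,
        inter_self, Real.volume_real_Ioc_of_le (by linarith), smul_eq_mul, mul_one,
        add_sub_cancel_left]
    simp_rw [hQ, ← huv]
    exact ((P.flip (v t)).continuous.tendsto _).comp (hfr (u t))
  have hbound (n : ℕ) (t : ℝ) :
      ‖Q n t‖ ≤ ‖P‖ * (C * ε ^ (1 / p.toReal)) * ε ^ (1 / q.toReal) := by
    rw [hQ]
    refine (P.le_opNorm₂ _ _).trans ?_
    gcongr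
    · exact (hC n (u t)).trans (by gcongr; exact norm_indicatorConstLp_Ioc_add_le p hε _)
    · exact norm_indicatorConstLp_Ioc_add_le q hε _
  have hcont (n : ℕ) : Continuous (Q n) :=
    continuous_finsetSum _ fun i _ => (Lp.continuous_intervalIntegral_add (g i) ε).mul
      (Lp.continuous_intervalIntegral_add (F i) ε)
  have hdom := tendsto_integral_of_dominated_convergence (μ := volume.restrict (Ioc a b))
    (fun _ => ‖P‖ * (C * ε ^ (1 / p.toReal)) * ε ^ (1 / q.toReal))
    (fun n => (hcont n).aestronglyMeasurable) (integrable_const _)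
    (fun n => Eventually.of_forall (hbound n)) (Eventually.of_forall hlim)
  rwa [setIntegral_const, Real.volume_real_Ioc_of_le hab, smul_eq_mul] at hdom

theorem mul_norm_le_of_tendsto_sum_translates {f : Lp ℝ p (volume : Measure ℝ)}
    (hf1 : Integrable (f : ℝ → ℝ)) {lam : ℕ → ℝ} {δ : ℝ} (hδ : 0 ≤ δ)
    (hsep : ∀ i j, i ≠ j → δ ≤ |lam i - lam j|) {F : ℕ → Lp ℝ p (volume : Measure ℝ)}
    (hF : ∀ i, (F i : ℝ → ℝ) =ᵐ[volume] fun x => f (x - lam i))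
    {g : ℕ → Lp ℝ q (volume : Measure ℝ)}
    (hfr : ∀ h, Tendsto (fun n => ∑ i ∈ Finset.range n,
      (ContinuousLinearMap.mul ℝ ℝ).lpPairing volume p q h (g i) • F i) atTop (𝓝 h))
    {C : ℝ} (hC0 : 0 ≤ C) (hC : ∀ n h, ‖∑ i ∈ Finset.range n,
      (ContinuousLinearMap.mul ℝ ℝ).lpPairing volume p q h (g i) • F i‖ ≤ C * ‖h‖)
    {ε : ℝ} (hε : 0 < ε) :
    δ * ‖f‖ ≤ 2 * C * (∫ x, |f x|) * ε ^ (1 / p.toReal) := by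
  set K := 2 * C * ε ^ (1 / p.toReal)
  set ψ : ℝ → ℝ := fun r => ∫ x in r..r + ε, |f x|
  have hψ0 : 0 ≤ ψ := fun r =>
    intervalIntegral.integral_nonneg (by linarith) fun _ _ => abs_nonneg _
  have hcoef (i : ℕ) (t : ℝ) : ‖f‖ * |∫ x in t..t + ε, g i x| ≤ K := by
    have hvol : volume (Ioc t (t + ε)) ≠ ∞ := measure_Ioc_lt_top.ne
    have := norm_mul_norm_le_of_norm_sum_range_smul_le hC i
      (indicatorConstLp p measurableSet_Ioc hvol (1 : ℝ))
    rw [lpPairing_mul_indicatorConstLp_left, Lp.norm_eq_of_ae_eq_comp_sub (hF i),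
      ← intervalIntegral.integral_of_le (by linarith), Real.norm_eq_abs, mul_comm] at this
    exact this.trans (mul_le_mul_of_nonneg_left
      (norm_indicatorConstLp_Ioc_add_le p hε.le hvol) (by positivity))
  have hterm (i : ℕ) (t : ℝ) :
      ‖f‖ * ((∫ x in t..t + ε, g i x) * ∫ x in t..t + ε, F i x) ≤ K * ψ (t - lam i) := by
    rw [intervalIntegral_eq_of_ae_eq_comp_sub (hF i), add_sub_right_comm]
    calc ‖f‖ * ((∫ x in t..t + ε, g i x) * ∫ x in t - lam i..t - lam i + ε, f x)
        ≤ (‖f‖ * |∫ x in t..t + ε, g i x|) * |∫ x in t - lam i..t - lam i + ε, f x| := by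
          rw [mul_assoc, ← abs_mul]
          exact mul_le_mul_of_nonneg_left (le_abs_self _) (norm_nonneg _)
      _ ≤ K * ψ (t - lam i) := mul_le_mul (hcoef i t)
          (intervalIntegral.abs_integral_le_integral_abs (by linarith)) (abs_nonneg _)
          (by positivity)
  have hbound (n : ℕ) : ‖f‖ * ∫ t in Ioc 0 δ, ∑ i ∈ Finset.range n,
      (∫ x in t..t + ε, g i x) * ∫ x in t..t + ε, F i x ≤ K * (ε * ∫ x, |f x|) := by
    rw [← integral_const_mul, ← hf1.abs.integral_intervalIntegral_add hε.le,
      ← integral_const_mul]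
    simp_rw [Finset.mul_sum]
    refine integral_Ioc_sum_le_integral_of_le_comp_sub
      ((hf1.abs.integrable_intervalIntegral_add hε.le).const_mul K)
      (fun r => mul_nonneg (by positivity) (hψ0 r)) hsep _ (fun i => ?_) hterm
    exact (continuous_const.mul ((Lp.continuous_intervalIntegral_add (g i) ε).mul
      (Lp.continuous_intervalIntegral_add (F i) ε))).integrableOn_Ioc
  have hlim := (tendsto_integral_sum_intervalIntegral_mul_of_tendsto hfr hC0 hC hε.le
    hδ).const_mul ‖f‖
  refine le_of_mul_le_mul_right ?_ hε
  convert le_of_tendsto' hlim hbound using 1 <;> ring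

end Translates

theorem no_schauder_frame_of_translates_Lp_inter_L1_general
    (p q : ℝ≥0∞) [Fact (1 ≤ p)] [Fact (1 ≤ q)] (hp' : p ≠ ∞)
    (hpq : p⁻¹ + q⁻¹ = 1)
    (f : Lp ℝ p (volume : Measure ℝ)) (hf1 : Integrable (f : ℝ → ℝ) volume)
    (lam : ℕ → ℝ)
    (hlam : ∃ δ > (0 : ℝ), ∀ i j : ℕ, i ≠ j → δ ≤ |lam i - lam j|)
    (F : ℕ → Lp ℝ p (volume : Measure ℝ))
    (hF : ∀ i : ℕ, (F i : ℝ → ℝ) =ᵐ[volume] fun x => f (x - lam i)) :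
    ¬ ∃ g : ℕ → Lp ℝ q (volume : Measure ℝ),
        ∀ h : Lp ℝ p (volume : Measure ℝ),
          Tendsto (fun n : ℕ => ∑ i ∈ Finset.range n, (∫ t : ℝ, h t * g i t) • F i)
            atTop (𝓝 h) := by
  rintro ⟨g, hg⟩
  obtain ⟨δ, hδ, hsep⟩ := hlam
  have : p.HolderConjugate q := holderConjugate_iff.2 hpq
  have hfr : ∀ h, Tendsto (fun n => ∑ i ∈ Finset.range n,
      (ContinuousLinearMap.mul ℝ ℝ).lpPairing volume p q h (g i) • F i) atTop (𝓝 h) := by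
    simpa only [ContinuousLinearMap.lpPairing_eq_integral, ContinuousLinearMap.mul_apply']
      using hg
  obtain ⟨C, hC0, hC⟩ := exists_norm_sum_range_smul_le_of_tendsto
    (c := fun i => ((ContinuousLinearMap.mul ℝ ℝ).lpPairing volume p q).flip (g i)) hfr
  have hp0 : 0 < 1 / p.toReal :=
    one_div_pos.2 (ENNReal.toReal_pos (zero_lt_one.trans_le Fact.out).ne' hp')
  have hf0 : ‖f‖ = 0 := le_antisymm (nonpos_of_mul_nonpos_right (nonpos_of_forall_le_mul_rpow hp0
    fun ε hε => mul_norm_le_of_tendsto_sum_translates hf1 hδ.le hsep hF hfr hC0 hC hε) hδ)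
    (norm_nonneg f)
  have hF0 (i : ℕ) : F i = 0 :=
    norm_eq_zero.1 ((Lp.norm_eq_of_ae_eq_comp_sub (hF i)).trans hf0)
  have := Lp.nontrivial_of_measure_ne_zero (μ := volume) (p := p)
    (zero_lt_one.trans_le Fact.out).ne' (s := Ioc (0 : ℝ) 1) measurableSet_Ioc
    measure_Ioc_lt_top.ne (by simp)
  obtain ⟨h, hh⟩ := exists_ne (0 : Lp ℝ p (volume : Measure ℝ))
  exact hh (tendsto_nhds_unique (hfr h) (by simp [hF0]))

/-- Let `1 < p < ∞` with conjugate exponent `q`, let `f ∈ L_p(ℝ) ∩ L_1(ℝ)`, and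
let `(f_i)` be a uniformly discrete sequence of translates of `f`. Then there is
no sequence `(g_i) ⊆ L_q(ℝ)` making `(f_i, g_i)` a Schauder frame for all of
`L_p(ℝ)`. -/
theorem no_schauder_frame_of_translates_Lp_inter_L1
    (p q : ℝ≥0∞) [Fact (1 ≤ p)] [Fact (1 ≤ q)] (hp : 1 < p) (hp' : p ≠ ∞)
    (hpq : p⁻¹ + q⁻¹ = 1)
    (f : Lp ℝ p (volume : Measure ℝ)) (hf1 : Integrable (f : ℝ → ℝ) volume)
    (lam : ℕ → ℝ)
    (hlam : ∃ δ > (0 : ℝ), ∀ i j : ℕ, i ≠ j → δ ≤ |lam i - lam j|)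
    (F : ℕ → Lp ℝ p (volume : Measure ℝ))
    (hF : ∀ i : ℕ, (F i : ℝ → ℝ) =ᵐ[volume] fun x => f (x - lam i)) :
    ¬ ∃ g : ℕ → Lp ℝ q (volume : Measure ℝ),
        ∀ h : Lp ℝ p (volume : Measure ℝ),
          Tendsto (fun n : ℕ => ∑ i ∈ Finset.range n, (∫ t : ℝ, h t * g i t) • F i)
            atTop (𝓝 h) :=
  no_schauder_frame_of_translates_Lp_inter_L1_general p q hp' hpq f hf1 lam hlam F hF
end

section
/- Let 1 ≤ p ≤ 2, let f ∈ L_p(ℝ) with f ≠ 0, let (λ_i)_{i≥1} be a sequence of distinct reals, and suppose (f_(λ_i))_{i≥1} is an unconditional basic sequence in L_p(ℝ). Then (f_(λ_i))_{i≥1} is equivalent to the unit vector basis of ℓ_p: there exist constants 0 < c ≤ C such that c (Σ_i |a_i|^p)^{1/p} ≤ ‖Σ_i a_i f_(λ_i)‖_p ≤ C (Σ_i |a_i|^p)^{1/p} for every finitely supported scalar sequence (a_i). -/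
/-!
Averaging over all `2 ^ n` sign patterns turns the unconditional constant `C` into two-sided
estimates. Pointwise, the average of `|∑ ± b_i| ^ p` is at most
`(∑ b_i ^ 2) ^ (p / 2) ≤ ∑ |b_i| ^ p` (concavity of `t ↦ t ^ (p / 2)` for `p ≤ 2`), and at least
`|b_j| ^ p / 2` for every `j`. Integrating the upper bound gives
`‖∑ a_i f_(λ_i)‖ ≤ C ‖f‖ (∑ |a_i| ^ p) ^ (1 / p)`. For the lower bound, unconditionality forces
`‖f_(λ_i) - f_(λ_j)‖ ≥ 2 ‖f‖ / (C + 1)`, so by continuity of translation in `L_p` the `λ_i` are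
`δ`-separated; the translates of an interval of length `δ` carrying part of the mass of `|f| ^ p`
are then disjoint, and on the `i`-th one the average is at least `|a_i| ^ p / 2` times that mass.
-/

open MeasureTheory ENNReal Finset Function

lemma Real.rpow_sum_le_sum_rpow {ι : Type*} {s : Finset ι} {z : ι → ℝ} (hz : ∀ i ∈ s, 0 ≤ z i)
    {q : ℝ} (hq0 : 0 < q) (hq1 : q ≤ 1) : (∑ i ∈ s, z i) ^ q ≤ ∑ i ∈ s, z i ^ q := by
  refine le_sum_of_subadditive_on_pred (· ^ q) (0 ≤ ·) (by simp [Real.zero_rpow hq0.ne']) ?_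
    (fun _ _ => add_nonneg) z hz
  intro x y hx hy
  lift x to NNReal using hx
  lift y to NNReal using hy
  exact_mod_cast NNReal.rpow_add_le_add_rpow x y hq0.le hq1

lemma sq_rpow_half (x p : ℝ) : (x ^ 2) ^ (p / 2) = |x| ^ p := by
  rw [← sq_abs, ← Real.rpow_natCast, ← Real.rpow_mul (abs_nonneg x)]
  norm_num
  ring_nf

lemma enorm_rpow_eq_ofReal_norm_rpow {F : Type*} [SeminormedAddGroup F] {r : ℝ} (hr : 0 ≤ r)
    (x : F) : ‖x‖ₑ ^ r = ENNReal.ofReal (‖x‖ ^ r) := by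
  rw [← ofReal_norm, ofReal_rpow_of_nonneg (norm_nonneg x) hr]

section SignAverages

variable {ι : Type*} [DecidableEq ι]

def flipSign (T : Finset ι) (i : ι) : ℝ := if i ∈ T then -1 else 1

lemma flipSign_eq_one_or_neg_one (T : Finset ι) (i : ι) :
    flipSign T i = 1 ∨ flipSign T i = -1 := by
  unfold flipSign; split_ifs <;> simp

lemma flipSign_mul_self (T : Finset ι) (i : ι) : flipSign T i * flipSign T i = 1 := by
  rcases flipSign_eq_one_or_neg_one T i with h | h <;> simp [h]

lemma sum_insert_flipSign_mul {s T : Finset ι} {j : ι} (hjs : j ∉ s) (hjT : j ∉ T) (b : ι → ℝ) :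
    ∑ i ∈ insert j s, flipSign T i * b i = b j + ∑ i ∈ s, flipSign T i * b i := by
  simp [sum_insert hjs, flipSign, hjT]

lemma sum_insert_flipSign_insert_mul {s : Finset ι} {j : ι} (hjs : j ∉ s) (T : Finset ι)
    (b : ι → ℝ) :
    ∑ i ∈ insert j s, flipSign (insert j T) i * b i = -b j + ∑ i ∈ s, flipSign T i * b i := by
  rw [sum_insert hjs]
  congr 1
  · simp [flipSign]
  · refine sum_congr rfl fun i hi => ?_
    simp [flipSign, ne_of_mem_of_not_mem hi hjs]

lemma sum_powerset_sq_sum_flipSign_mul (s : Finset ι) (b : ι → ℝ) :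
    ∑ T ∈ s.powerset, (∑ i ∈ s, flipSign T i * b i) ^ 2 = 2 ^ #s * ∑ i ∈ s, b i ^ 2 := by
  induction s using Finset.induction_on with
  | empty => simp
  | insert j s hj ih =>
    have hstep : ∀ T ∈ s.powerset, (∑ i ∈ insert j s, flipSign T i * b i) ^ 2 +
        (∑ i ∈ insert j s, flipSign (insert j T) i * b i) ^ 2 =
        2 * (∑ i ∈ s, flipSign T i * b i) ^ 2 + 2 * b j ^ 2 := fun T hT => by
      rw [sum_insert_flipSign_mul hj fun h => hj (mem_powerset.1 hT h),
        sum_insert_flipSign_insert_mul hj]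
      ring
    rw [sum_powerset_insert hj, ← sum_add_distrib, sum_congr rfl hstep, sum_add_distrib,
      ← mul_sum, ih, sum_const, card_powerset, sum_insert hj, card_insert_of_notMem hj,
      nsmul_eq_mul]
    push_cast
    ring

lemma sum_powerset_abs_sum_flipSign_mul_rpow_le {p : ℝ} (hp0 : 0 < p) (hp2 : p ≤ 2)
    (s : Finset ι) (b : ι → ℝ) :
    ∑ T ∈ s.powerset, |∑ i ∈ s, flipSign T i * b i| ^ p ≤ 2 ^ #s * ∑ i ∈ s, |b i| ^ p := by
  set N : ℝ := 2 ^ #s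
  have hN : 0 < N := by positivity
  have jensen := (Real.concaveOn_rpow (p := p / 2) (by positivity) (by linarith)).le_map_sum
    (t := s.powerset) (w := fun _ => N⁻¹) (p := fun T => (∑ i ∈ s, flipSign T i * b i) ^ 2)
    (fun _ _ => by positivity) (by simp [N]) (fun _ _ => Set.mem_Ici.2 (sq_nonneg _))
  simp only [smul_eq_mul, ← mul_sum, sum_powerset_sq_sum_flipSign_mul, sq_rpow_half] at jensen
  calc ∑ T ∈ s.powerset, |∑ i ∈ s, flipSign T i * b i| ^ p
      ≤ N * (N⁻¹ * (N * ∑ i ∈ s, b i ^ 2)) ^ (p / 2) := (inv_mul_le_iff₀ hN).1 jensen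
    _ = N * (∑ i ∈ s, b i ^ 2) ^ (p / 2) := by rw [inv_mul_cancel_left₀ hN.ne']
    _ ≤ N * ∑ i ∈ s, |b i| ^ p := by
        gcongr
        simpa only [sq_rpow_half] using
          Real.rpow_sum_le_sum_rpow (q := p / 2) (fun i _ => sq_nonneg (b i)) (by positivity)
            (by linarith)

lemma abs_rpow_le_abs_add_rpow_add_abs_neg_add_rpow {p : ℝ} (hp : 0 ≤ p) (x y : ℝ) :
    |x| ^ p ≤ |x + y| ^ p + |-x + y| ^ p := by
  have h2x : 2 * |x| ≤ |x + y| + |-x + y| := by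
    simpa [← two_mul, abs_mul] using abs_sub (x + y) (-x + y)
  rcases le_total |x + y| |-x + y| with h | h
  · exact (Real.rpow_le_rpow (abs_nonneg x) (by linarith) hp).trans
      (le_add_of_nonneg_left (by positivity))
  · exact (Real.rpow_le_rpow (abs_nonneg x) (by linarith) hp).trans
      (le_add_of_nonneg_right (by positivity))

lemma two_pow_card_mul_abs_rpow_le_sum_powerset {p : ℝ} (hp : 0 ≤ p) {s : Finset ι} {j : ι}
    (hj : j ∈ s) (b : ι → ℝ) :
    2 ^ #s * |b j| ^ p ≤ 2 * ∑ T ∈ s.powerset, |∑ i ∈ s, flipSign T i * b i| ^ p := by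
  obtain ⟨s, hjs, rfl⟩ : ∃ s', j ∉ s' ∧ insert j s' = s :=
    ⟨s.erase j, notMem_erase j s, insert_erase hj⟩
  have hpair : ∀ T ∈ s.powerset, |b j| ^ p ≤ |∑ i ∈ insert j s, flipSign T i * b i| ^ p +
      |∑ i ∈ insert j s, flipSign (insert j T) i * b i| ^ p := fun T hT => by
    rw [sum_insert_flipSign_mul hjs fun h => hjs (mem_powerset.1 hT h),
      sum_insert_flipSign_insert_mul hjs]
    exact abs_rpow_le_abs_add_rpow_add_abs_neg_add_rpow hp _ _
  calc 2 ^ #(insert j s) * |b j| ^ p = 2 * ∑ T ∈ s.powerset, |b j| ^ p := by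
        rw [sum_const, card_powerset, card_insert_of_notMem hjs, nsmul_eq_mul]
        push_cast
        ring
    _ ≤ _ := by
        rw [sum_powerset_insert hjs, ← sum_add_distrib]
        gcongr with T hT
        exact hpair T hT

lemma sum_powerset_enorm_sum_flipSign_mul_rpow_le {r : ℝ} (hr0 : 0 < r) (hr2 : r ≤ 2)
    (s : Finset ι) (b : ι → ℝ) :
    ∑ T ∈ s.powerset, ‖∑ i ∈ s, flipSign T i * b i‖ₑ ^ r ≤ 2 ^ #s * ∑ i ∈ s, ‖b i‖ₑ ^ r := by
  simp only [enorm_rpow_eq_ofReal_norm_rpow hr0.le, Real.norm_eq_abs]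
  rw [← ofReal_sum_of_nonneg fun _ _ => by positivity,
    ← ofReal_sum_of_nonneg fun _ _ => by positivity, ← ofReal_ofNat 2, ← ofReal_pow zero_le_two,
    ← ofReal_mul (by positivity)]
  exact ofReal_le_ofReal (sum_powerset_abs_sum_flipSign_mul_rpow_le hr0 hr2 s b)

lemma two_pow_card_mul_enorm_rpow_le_sum_powerset {r : ℝ} (hr : 0 ≤ r) {s : Finset ι} {j : ι}
    (hj : j ∈ s) (b : ι → ℝ) :
    2 ^ #s * ‖b j‖ₑ ^ r ≤ 2 * ∑ T ∈ s.powerset, ‖∑ i ∈ s, flipSign T i * b i‖ₑ ^ r := by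
  simp only [enorm_rpow_eq_ofReal_norm_rpow hr, Real.norm_eq_abs]
  rw [← ofReal_sum_of_nonneg fun _ _ => by positivity, ← ofReal_ofNat 2,
    ← ofReal_pow zero_le_two, ← ofReal_mul (by positivity), ← ofReal_mul zero_le_two]
  exact ofReal_le_ofReal (two_pow_card_mul_abs_rpow_le_sum_powerset hr hj b)

end SignAverages

section LpSignAverages

variable {α ι : Type*} [MeasurableSpace α] {μ : Measure α} {p : ℝ≥0∞}

lemma MeasureTheory.Lp.enorm_rpow_toReal_eq_lintegral {E : Type*} [NormedAddCommGroup E]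
    (h : Lp E p μ) (hp0 : p ≠ 0) (hp : p ≠ ∞) : ‖h‖ₑ ^ p.toReal = ∫⁻ x, ‖h x‖ₑ ^ p.toReal ∂μ := by
  rw [Lp.enorm_def, eLpNorm_eq_eLpNorm' hp0 hp,
    lintegral_rpow_enorm_eq_rpow_eLpNorm' (toReal_pos hp0 hp)]

lemma MeasureTheory.Lp.coeFn_sum_smul (c : ι → ℝ) (h : ι → Lp ℝ p μ) (s : Finset ι) :
    ⇑(∑ i ∈ s, c i • h i) =ᵐ[μ] fun x => ∑ i ∈ s, c i * h i x := by
  filter_upwards [Lp.coeFn_fun_finsetSum s (fun i => c i • h i),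
    (Filter.eventually_all_finset s).2 fun i _ => Lp.coeFn_smul (c i) (h i)] with x hsum hsmul
  rw [hsum]
  exact sum_congr rfl fun i hi => hsmul i hi

lemma MeasureTheory.Lp.setLIntegral_enorm_smul_rpow (c : ℝ) (g : Lp ℝ p μ) (E : Set α) {r : ℝ}
    (hr : 0 ≤ r) : ∫⁻ x in E, ‖(c • g) x‖ₑ ^ r ∂μ = ‖c‖ₑ ^ r * ∫⁻ x in E, ‖g x‖ₑ ^ r ∂μ := by
  rw [← lintegral_const_mul' _ _ (rpow_ne_top_of_nonneg hr enorm_ne_top)]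
  refine lintegral_congr_ae (ae_restrict_of_ae ?_)
  filter_upwards [Lp.coeFn_smul c g] with x hx
  rw [hx, Pi.smul_apply, smul_eq_mul, enorm_mul, mul_rpow_of_nonneg _ _ hr]

variable [DecidableEq ι]

lemma MeasureTheory.Lp.ae_forall_powerset_coeFn_sum_flipSign_smul (h : ι → Lp ℝ p μ)
    (s : Finset ι) :
    ∀ᵐ x ∂μ, ∀ T ∈ s.powerset,
      (∑ i ∈ s, flipSign T i • h i) x = ∑ i ∈ s, flipSign T i * h i x :=
  (Filter.eventually_all_finset _).2 fun _ _ => Lp.coeFn_sum_smul _ h s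

lemma MeasureTheory.Lp.sum_powerset_enorm_sum_flipSign_smul_rpow_le (hp0 : p ≠ 0) (hp2 : p ≤ 2)
    (h : ι → Lp ℝ p μ) (s : Finset ι) :
    ∑ T ∈ s.powerset, ‖∑ i ∈ s, flipSign T i • h i‖ₑ ^ p.toReal ≤
      2 ^ #s * ∑ i ∈ s, ‖h i‖ₑ ^ p.toReal := by
  have hp : p ≠ ∞ := ne_top_of_le_ne_top ofNat_ne_top hp2
  simp only [Lp.enorm_rpow_toReal_eq_lintegral _ hp0 hp]
  rw [← lintegral_finsetSum' _ fun T _ => (Lp.aestronglyMeasurable _).enorm.pow_const _,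
    ← lintegral_finsetSum' _ fun i _ => (Lp.aestronglyMeasurable _).enorm.pow_const _,
    ← lintegral_const_mul' _ _ (by simp)]
  refine lintegral_mono_ae ?_
  filter_upwards [Lp.ae_forall_powerset_coeFn_sum_flipSign_smul h s] with x hx
  rw [sum_congr rfl fun T hT => by rw [hx T hT]]
  exact sum_powerset_enorm_sum_flipSign_mul_rpow_le (toReal_pos hp0 hp)
    (by simpa using toReal_mono ofNat_ne_top hp2) s fun i => h i x

lemma MeasureTheory.Lp.two_pow_card_mul_sum_setLIntegral_le_sum_powerset (hp0 : p ≠ 0) (hp : p ≠ ∞)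
    (h : ι → Lp ℝ p μ) {s : Finset ι} {E : ι → Set α} (hE : (s : Set ι).PairwiseDisjoint E)
    (hEm : ∀ i ∈ s, MeasurableSet (E i)) :
    2 ^ #s * ∑ i ∈ s, ∫⁻ x in E i, ‖h i x‖ₑ ^ p.toReal ∂μ ≤
      2 * ∑ T ∈ s.powerset, ‖∑ i ∈ s, flipSign T i • h i‖ₑ ^ p.toReal := by
  simp only [Lp.enorm_rpow_toReal_eq_lintegral _ hp0 hp]
  rw [← lintegral_finsetSum' _ fun T _ => (Lp.aestronglyMeasurable _).enorm.pow_const _,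
    ← lintegral_const_mul' _ _ ofNat_ne_top, mul_sum]
  set Φ : α → ℝ≥0∞ :=
    fun x => 2 * ∑ T ∈ s.powerset, ‖(∑ i ∈ s, flipSign T i • h i) x‖ₑ ^ p.toReal
  calc ∑ i ∈ s, 2 ^ #s * ∫⁻ x in E i, ‖h i x‖ₑ ^ p.toReal ∂μ
      = ∑ i ∈ s, ∫⁻ x in E i, 2 ^ #s * ‖h i x‖ₑ ^ p.toReal ∂μ := by
        simp only [lintegral_const_mul' _ _ (pow_ne_top ofNat_ne_top)]
    _ ≤ ∑ i ∈ s, ∫⁻ x in E i, Φ x ∂μ := by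
        refine sum_le_sum fun i hi => lintegral_mono_ae (ae_restrict_of_ae ?_)
        filter_upwards [Lp.ae_forall_powerset_coeFn_sum_flipSign_smul h s] with x hx
        simp only [Φ]
        rw [sum_congr rfl fun T hT => by rw [hx T hT]]
        exact two_pow_card_mul_enorm_rpow_le_sum_powerset toReal_nonneg hi fun i => h i x
    _ = ∫⁻ x in ⋃ i ∈ s, E i, Φ x ∂μ := (lintegral_biUnion_finset hE hEm _).symm
    _ ≤ ∫⁻ x, Φ x ∂μ := setLIntegral_le_lintegral _ _

end LpSignAverages

section Unconditional

variable {ι E : Type*}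

def IsUnconditional [SeminormedAddCommGroup E] [Module ℝ E] (C : ℝ) (g : ι → E) : Prop :=
  ∀ (a : ι → ℝ) (s : Finset ι) (sgn : ι → ℝ), (∀ i, sgn i = 1 ∨ sgn i = -1) →
    ‖∑ i ∈ s, (sgn i * a i) • g i‖ ≤ C * ‖∑ i ∈ s, a i • g i‖

variable [NormedAddCommGroup E] [NormedSpace ℝ E] {C : ℝ} {g : ι → E}

lemma IsUnconditional.norm_sum_flipSign_smul_le [DecidableEq ι] (hg : IsUnconditional C g)
    (a : ι → ℝ) (s T : Finset ι) :
    ‖∑ i ∈ s, flipSign T i • a i • g i‖ ≤ C * ‖∑ i ∈ s, a i • g i‖ := by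
  simpa only [mul_smul] using hg a s (flipSign T) (flipSign_eq_one_or_neg_one T)

lemma IsUnconditional.norm_sum_smul_le [DecidableEq ι] (hg : IsUnconditional C g)
    (a : ι → ℝ) (s T : Finset ι) :
    ‖∑ i ∈ s, a i • g i‖ ≤ C * ‖∑ i ∈ s, flipSign T i • a i • g i‖ := by
  simpa only [← mul_assoc, flipSign_mul_self, one_mul, mul_smul] using
    hg (fun i => flipSign T i * a i) s (flipSign T) (flipSign_eq_one_or_neg_one T)

lemma IsUnconditional.one_le (hg : IsUnconditional C g) {i : ι} (hi : g i ≠ 0) : 1 ≤ C := by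
  have h := hg (fun _ => 1) {i} (fun _ => 1) fun _ => Or.inl rfl
  simp only [mul_one, sum_singleton, one_smul] at h
  exact (le_mul_iff_one_le_left (norm_pos_iff.2 hi)).1 h

lemma IsUnconditional.two_mul_norm_le [DecidableEq ι] (hg : IsUnconditional C g) {i j : ι}
    (hij : i ≠ j) : 2 * ‖g i‖ ≤ (C + 1) * ‖g i - g j‖ := by
  have hsum := hg.norm_sum_smul_le (fun _ => 1) {i, j} {j}
  simp only [sum_pair hij, flipSign, mem_singleton, hij, if_false, if_true, one_smul,
    neg_smul, ← sub_eq_add_neg] at hsum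
  calc 2 * ‖g i‖ = ‖(g i + g j) + (g i - g j)‖ := by
        rw [add_add_sub_cancel, ← two_smul ℝ, norm_smul, Real.norm_two]
    _ ≤ ‖g i + g j‖ + ‖g i - g j‖ := norm_add_le _ _
    _ ≤ (C + 1) * ‖g i - g j‖ := by linarith

end Unconditional

section LpEstimates

variable {α ι : Type*} [MeasurableSpace α] {μ : Measure α} {p : ℝ≥0∞} [Fact (1 ≤ p)]
  {C : ℝ} {g : ι → Lp ℝ p μ}

theorem IsUnconditional.norm_sum_smul_le_sum_norm_rpow (hg : IsUnconditional C g) (hC : 0 ≤ C)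
    (hp2 : p ≤ 2) (a : ι → ℝ) (s : Finset ι) :
    ‖∑ i ∈ s, a i • g i‖ ≤ C * (∑ i ∈ s, ‖a i • g i‖ ^ p.toReal) ^ (1 / p.toReal) := by
  classical
  have hp : p ≠ ∞ := ne_top_of_le_ne_top ofNat_ne_top hp2
  have hp0 : p ≠ 0 := (zero_lt_one.trans_le Fact.out).ne'
  have hr : 0 < p.toReal := toReal_pos hp0 hp
  obtain ⟨T, -, hT⟩ := ENNReal.exists_le_of_sum_le (powerset_nonempty s)
    (f := fun T => ‖∑ i ∈ s, flipSign T i • a i • g i‖ₑ ^ p.toReal)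
    (g := fun _ => ∑ i ∈ s, ‖a i • g i‖ₑ ^ p.toReal) (by
      rw [sum_const, card_powerset, nsmul_eq_mul]
      push_cast
      exact Lp.sum_powerset_enorm_sum_flipSign_smul_rpow_le hp0 hp2 _ s)
  simp only [enorm_rpow_eq_ofReal_norm_rpow hr.le] at hT
  rw [← ofReal_sum_of_nonneg fun _ _ => by positivity,
    ofReal_le_ofReal_iff (by positivity)] at hT
  calc ‖∑ i ∈ s, a i • g i‖ ≤ C * ‖∑ i ∈ s, flipSign T i • a i • g i‖ :=
        hg.norm_sum_smul_le a s T
    _ ≤ C * (∑ i ∈ s, ‖a i • g i‖ ^ p.toReal) ^ (1 / p.toReal) := by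
        rw [one_div]
        gcongr
        exact (Real.le_rpow_inv_iff_of_pos (norm_nonneg _) (by positivity) hr).2 hT

theorem IsUnconditional.norm_sum_smul_le_of_norm_le (hg : IsUnconditional C g) (hC : 0 ≤ C)
    (hp2 : p ≤ 2) {M : ℝ} (hM0 : 0 ≤ M) (hM : ∀ i, ‖g i‖ ≤ M) (a : ι → ℝ) (s : Finset ι) :
    ‖∑ i ∈ s, a i • g i‖ ≤ C * M * (∑ i ∈ s, |a i| ^ p.toReal) ^ (1 / p.toReal) := by
  have hr : 0 < p.toReal :=
    toReal_pos (zero_lt_one.trans_le Fact.out).ne' (ne_top_of_le_ne_top ofNat_ne_top hp2)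
  refine (hg.norm_sum_smul_le_sum_norm_rpow hC hp2 a s).trans ?_
  rw [mul_assoc]
  gcongr
  calc (∑ i ∈ s, ‖a i • g i‖ ^ p.toReal) ^ (1 / p.toReal)
      ≤ (∑ i ∈ s, |a i| ^ p.toReal * M ^ p.toReal) ^ (1 / p.toReal) := by
        gcongr with i
        rw [norm_smul, Real.norm_eq_abs, Real.mul_rpow (abs_nonneg _) (norm_nonneg _)]
        gcongr
        exact hM i
    _ = M * (∑ i ∈ s, |a i| ^ p.toReal) ^ (1 / p.toReal) := by
        rw [← sum_mul, Real.mul_rpow (by positivity) (by positivity), ← Real.rpow_mul hM0,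
          mul_one_div_cancel hr.ne', Real.rpow_one, mul_comm]

theorem IsUnconditional.le_norm_sum_smul (hg : IsUnconditional C g) (hp : p ≠ ∞)
    {E : ι → Set α} (hE : Pairwise (Disjoint on E)) (hEm : ∀ i, MeasurableSet (E i))
    {κ : ℝ} (hκ0 : 0 ≤ κ) (hκ : ∀ i, ENNReal.ofReal κ ≤ ∫⁻ x in E i, ‖g i x‖ₑ ^ p.toReal ∂μ)
    (a : ι → ℝ) (s : Finset ι) :
    (κ / 2) ^ (1 / p.toReal) * (∑ i ∈ s, |a i| ^ p.toReal) ^ (1 / p.toReal) ≤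
      C * ‖∑ i ∈ s, a i • g i‖ := by
  classical
  have hp0 : p ≠ 0 := (zero_lt_one.trans_le Fact.out).ne'
  have hr : 0 < p.toReal := toReal_pos hp0 hp
  have hsmul : ∀ i, ENNReal.ofReal (|a i| ^ p.toReal * κ) ≤
      ∫⁻ x in E i, ‖(a i • g i) x‖ₑ ^ p.toReal ∂μ := fun i => by
    rw [Lp.setLIntegral_enorm_smul_rpow _ _ _ hr.le, ofReal_mul (by positivity),
      enorm_rpow_eq_ofReal_norm_rpow hr.le, Real.norm_eq_abs]
    gcongr
    exact hκ i
  obtain ⟨T, -, hT⟩ := ENNReal.exists_le_of_sum_le (powerset_nonempty s)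
    (f := fun _ => ∑ i ∈ s, ∫⁻ x in E i, ‖(a i • g i) x‖ₑ ^ p.toReal ∂μ)
    (g := fun T => 2 * ‖∑ i ∈ s, flipSign T i • a i • g i‖ₑ ^ p.toReal) (by
      rw [sum_const, card_powerset, nsmul_eq_mul, ← mul_sum]
      push_cast
      exact Lp.two_pow_card_mul_sum_setLIntegral_le_sum_powerset hp0 hp _ (hE.set_pairwise _)
        fun i _ => hEm i)
  have hpow : κ / 2 * ∑ i ∈ s, |a i| ^ p.toReal ≤
      ‖∑ i ∈ s, flipSign T i • a i • g i‖ ^ p.toReal := by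
    suffices (∑ i ∈ s, |a i| ^ p.toReal) * κ ≤
        2 * ‖∑ i ∈ s, flipSign T i • a i • g i‖ ^ p.toReal by linarith
    rw [← ofReal_le_ofReal_iff (by positivity), sum_mul,
      ofReal_sum_of_nonneg fun _ _ => by positivity, ofReal_mul zero_le_two, ofReal_ofNat,
      ← enorm_rpow_eq_ofReal_norm_rpow hr.le]
    exact (sum_le_sum fun i _ => hsmul i).trans hT
  calc (κ / 2) ^ (1 / p.toReal) * (∑ i ∈ s, |a i| ^ p.toReal) ^ (1 / p.toReal)
      = (κ / 2 * ∑ i ∈ s, |a i| ^ p.toReal) ^ (1 / p.toReal) :=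
        (Real.mul_rpow (by positivity) (by positivity)).symm
    _ ≤ ‖∑ i ∈ s, flipSign T i • a i • g i‖ := by
        rw [one_div]
        exact (Real.rpow_inv_le_iff_of_pos (by positivity) (norm_nonneg _) hr).2 hpow
    _ ≤ C * ‖∑ i ∈ s, a i • g i‖ := hg.norm_sum_flipSign_smul_le a s T

end LpEstimates

section Translates

variable {E : Type*} [NormedAddCommGroup E] {p : ℝ≥0∞}

lemma MeasureTheory.Lp.eq_domAddAct_mk_neg_vadd {f F : Lp E p (volume : Measure ℝ)} {t : ℝ}
    (hF : ⇑F =ᵐ[volume] fun x => f (x - t)) : F = DomAddAct.mk (-t) +ᵥ f :=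
  Lp.ext <| hF.trans <| by
    filter_upwards [DomAddAct.vadd_Lp_ae_eq (DomAddAct.mk (-t)) f] with x hx
    rw [hx, Equiv.symm_apply_apply, vadd_eq_add, neg_add_eq_sub]

lemma setLIntegral_Ico_domAddAct_mk_neg_vadd (f : Lp E p (volume : Measure ℝ)) (r t δ c : ℝ) :
    ∫⁻ x in Set.Ico (t + c) (t + c + δ), ‖(DomAddAct.mk (-c) +ᵥ f) x‖ₑ ^ r =
      ∫⁻ x in Set.Ico t (t + δ), ‖f x‖ₑ ^ r := by
  have hpre : Set.Ico (t + c) (t + c + δ) = (fun x => -c + x) ⁻¹' Set.Ico t (t + δ) := by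
    rw [Set.preimage_const_add_Ico, sub_neg_eq_add, sub_neg_eq_add, add_right_comm]
  have hae : ∀ᵐ x ∂volume.restrict (Set.Ico (t + c) (t + c + δ)),
      ‖(DomAddAct.mk (-c) +ᵥ f) x‖ₑ ^ r = ‖f (-c + x)‖ₑ ^ r := by
    refine ae_restrict_of_ae ?_
    filter_upwards [DomAddAct.vadd_Lp_ae_eq (DomAddAct.mk (-c)) f] with x hx
    rw [hx, Equiv.symm_apply_apply, vadd_eq_add]
  rw [lintegral_congr_ae hae, hpre]
  exact (measurePreserving_add_left volume (-c)).setLIntegral_comp_preimage_emb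
    (measurableEmbedding_addLeft (-c)) (fun y => ‖f y‖ₑ ^ r) _

lemma disjoint_Ico_of_le_abs_sub {t δ a b : ℝ} (h : δ ≤ |a - b|) :
    Disjoint (Set.Ico (t + a) (t + a + δ)) (Set.Ico (t + b) (t + b + δ)) := by
  rw [Set.Ico_disjoint_Ico]
  rcases le_total a b with hab | hab
  · rw [abs_sub_comm, abs_of_nonneg (sub_nonneg.2 hab)] at h
    exact (min_le_left _ _).trans (by linarith [le_max_right (t + a) (t + b)])
  · rw [abs_of_nonneg (sub_nonneg.2 hab)] at h
    exact (min_le_right _ _).trans (by linarith [le_max_left (t + a) (t + b)])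

lemma dist_domAddAct_mk_vadd (f : Lp E p (volume : Measure ℝ)) (a b : ℝ) :
    dist (DomAddAct.mk a +ᵥ f) (DomAddAct.mk b +ᵥ f) = dist (DomAddAct.mk (a - b) +ᵥ f) f := by
  have : DomAddAct.mk a +ᵥ f = DomAddAct.mk b +ᵥ (DomAddAct.mk (a - b) +ᵥ f) := by
    rw [← add_vadd, ← DomAddAct.mk_add, sub_add_cancel]
  rw [this, DomAddAct.dist_vadd_Lp]

variable [Fact (1 ≤ p)]

lemma exists_ofReal_le_setLIntegral_Ico {f : Lp E p (volume : Measure ℝ)} (hf : f ≠ 0)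
    (hp : p ≠ ∞) {δ : ℝ} (hδ : 0 < δ) :
    ∃ t κ, 0 < κ ∧ ENNReal.ofReal κ ≤ ∫⁻ x in Set.Ico t (t + δ), ‖f x‖ₑ ^ p.toReal := by
  have hp0 : p ≠ 0 := (zero_lt_one.trans_le Fact.out).ne'
  suffices ∃ t, 0 < ∫⁻ x in Set.Ico t (t + δ), ‖f x‖ₑ ^ p.toReal by
    obtain ⟨t, ht⟩ := this
    obtain ⟨κ, -, hκ, hκt⟩ := ENNReal.lt_iff_exists_real_btwn.1 ht
    exact ⟨t, κ, ofReal_pos.1 hκ, hκt.le⟩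
  by_contra! h
  refine hf (enorm_eq_zero.1 <| (rpow_eq_zero_iff_of_pos (toReal_pos hp0 hp)).1 ?_)
  rw [Lp.enorm_rpow_toReal_eq_lintegral f hp0 hp, ← setLIntegral_univ, ← iUnion_Ico_zsmul hδ]
  refine le_antisymm ((lintegral_iUnion_le _ _).trans ?_) zero_le
  simp only [add_smul, one_smul, nonpos_iff_eq_zero, ENNReal.tsum_eq_zero]
  exact fun n => nonpos_iff_eq_zero.1 (h _)

lemma exists_pos_le_abs_sub_of_le_dist [Fact (p ≠ ∞)] {ι : Type*}
    (f : Lp E p (volume : Measure ℝ)) {lam : ι → ℝ} {ε : ℝ} (hε : 0 < ε)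
    (h : ∀ i j, i ≠ j → ε ≤ dist (DomAddAct.mk (-lam i) +ᵥ f) (DomAddAct.mk (-lam j) +ᵥ f)) :
    ∃ δ > 0, ∀ i j, i ≠ j → δ ≤ |lam i - lam j| := by
  have hcont : ContinuousAt (fun t : ℝ => DomAddAct.mk t +ᵥ f) 0 :=
    (DomAddAct.continuous_mk.vadd continuous_const).continuousAt
  obtain ⟨δ, hδ, hball⟩ := Metric.continuousAt_iff.1 hcont ε hε
  refine ⟨δ, hδ, fun i j hij => not_lt.1 fun hlt => (h i j hij).not_gt ?_⟩
  have := hball (x := lam j - lam i) (by rwa [Real.dist_eq, sub_zero, abs_sub_comm])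
  rwa [DomAddAct.mk_zero, zero_vadd, ← neg_sub_neg, ← dist_domAddAct_mk_vadd] at this

lemma IsUnconditional.exists_pos_le_abs_sub [NormedSpace ℝ E] [Fact (p ≠ ∞)] {ι : Type*}
    {f : Lp E p (volume : Measure ℝ)} (hf : f ≠ 0) {lam : ι → ℝ} {C : ℝ}
    (hC : IsUnconditional C fun i => DomAddAct.mk (-lam i) +ᵥ f) :
    ∃ δ > 0, ∀ i j, i ≠ j → δ ≤ |lam i - lam j| := by
  classical
  refine exists_pos_le_abs_sub_of_le_dist f (ε := 2 * ‖f‖ / (|C| + 1))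
    (div_pos (by simpa using hf) (by positivity)) fun i j hij => ?_
  have h2 := hC.two_mul_norm_le hij
  rw [DomAddAct.norm_vadd_Lp] at h2
  rw [dist_eq_norm, div_le_iff₀ (by positivity), mul_comm _ (|C| + 1)]
  exact h2.trans (by gcongr; exact le_abs_self C)

end Translates

theorem unconditional_translates_equiv_lp_basis_general
    (p : ℝ) (hp : 1 ≤ p) (hp2 : p ≤ 2)
    [Fact (1 ≤ ENNReal.ofReal p)]
    (f : Lp ℝ (ENNReal.ofReal p) (volume : Measure ℝ)) (hf : f ≠ 0)
    (lam : ℕ → ℝ)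
    (F : ℕ → Lp ℝ (ENNReal.ofReal p) (volume : Measure ℝ))
    (hF : ∀ i : ℕ, (F i : ℝ → ℝ) =ᵐ[volume] fun x => f (x - lam i))
    (hunc : ∃ C : ℝ, ∀ (a : ℕ → ℝ) (s : Finset ℕ) (sgn : ℕ → ℝ),
      (∀ i, sgn i = 1 ∨ sgn i = -1) →
      ‖∑ i ∈ s, (sgn i * a i) • F i‖ ≤ C * ‖∑ i ∈ s, a i • F i‖) :
    ∃ c C : ℝ, 0 < c ∧ c ≤ C ∧ ∀ (a : ℕ → ℝ) (s : Finset ℕ),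
      c * (∑ i ∈ s, |a i| ^ p) ^ (1 / p) ≤ ‖∑ i ∈ s, a i • F i‖ ∧
      ‖∑ i ∈ s, a i • F i‖ ≤ C * (∑ i ∈ s, |a i| ^ p) ^ (1 / p) := by
  obtain ⟨C, hC⟩ : ∃ C, IsUnconditional C F := hunc
  obtain rfl : F = fun i => DomAddAct.mk (-lam i) +ᵥ f :=
    funext fun i => Lp.eq_domAddAct_mk_neg_vadd (hF i)
  have : Fact (ENNReal.ofReal p ≠ ∞) := ⟨ofReal_ne_top⟩
  have hC1 : 1 ≤ C := hC.one_le (i := 0) (by simpa [← norm_pos_iff] using hf)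
  obtain ⟨δ, hδ, hsep⟩ := hC.exists_pos_le_abs_sub hf
  obtain ⟨t, κ, hκ, htκ⟩ := exists_ofReal_le_setLIntegral_Ico hf ofReal_ne_top hδ
  have hlower := hC.le_norm_sum_smul ofReal_ne_top
    (E := fun i => Set.Ico (t + lam i) (t + lam i + δ))
    (fun i j hij => disjoint_Ico_of_le_abs_sub (hsep i j hij)) (fun _ => measurableSet_Ico) hκ.le
    fun i => by rwa [setLIntegral_Ico_domAddAct_mk_neg_vadd]
  have hupper := hC.norm_sum_smul_le_of_norm_le (by linarith) (ofReal_le_of_le_toReal hp2)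
    (norm_nonneg f) fun i => (DomAddAct.norm_vadd_Lp _ f).le
  rw [toReal_ofReal (by linarith)] at hlower hupper
  refine ⟨(κ / 2) ^ (1 / p) / C, C * ‖f‖, by positivity, ?_, fun a s => ⟨?_, hupper a s⟩⟩
  · have hsingle := hlower (fun _ => 1) {0}
    simp only [sum_singleton, abs_one, Real.one_rpow, mul_one, one_smul,
      DomAddAct.norm_vadd_Lp] at hsingle
    calc (κ / 2) ^ (1 / p) / C ≤ ‖f‖ := by rwa [div_le_iff₀ (by linarith), mul_comm]
      _ ≤ C * ‖f‖ := le_mul_of_one_le_left (norm_nonneg f) hC1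
  · rw [div_mul_eq_mul_div, div_le_iff₀ (by linarith), mul_comm _ C]
    exact hlower a s

/-- Let `1 ≤ p ≤ 2`, `f ∈ L_p(ℝ)`, `f ≠ 0`, and let `(f_(λ_i))` be an
unconditional basic sequence of distinct translates of `f` in `L_p(ℝ)`.  Then
`(f_(λ_i))` is equivalent to the unit vector basis of `ℓ_p`. -/
theorem unconditional_translates_equiv_lp_basis
    (p : ℝ) (hp : 1 ≤ p) (hp2 : p ≤ 2)
    [Fact (1 ≤ ENNReal.ofReal p)]
    (f : Lp ℝ (ENNReal.ofReal p) (volume : Measure ℝ)) (hf : f ≠ 0)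
    (lam : ℕ → ℝ) (hlam : Function.Injective lam)
    (F : ℕ → Lp ℝ (ENNReal.ofReal p) (volume : Measure ℝ))
    (hF : ∀ i : ℕ, (F i : ℝ → ℝ) =ᵐ[volume] fun x => f (x - lam i))
    (hunc : ∃ C : ℝ, ∀ (a : ℕ → ℝ) (s : Finset ℕ) (sgn : ℕ → ℝ),
      (∀ i, sgn i = 1 ∨ sgn i = -1) →
      ‖∑ i ∈ s, (sgn i * a i) • F i‖ ≤ C * ‖∑ i ∈ s, a i • F i‖)
    (hbasic : ∃ K : ℝ, ∀ (a : ℕ → ℝ) (m n : ℕ), m ≤ n →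
      ‖∑ i ∈ Finset.range m, a i • F i‖ ≤ K * ‖∑ i ∈ Finset.range n, a i • F i‖) :
    ∃ c C : ℝ, 0 < c ∧ c ≤ C ∧ ∀ (a : ℕ → ℝ) (s : Finset ℕ),
      c * (∑ i ∈ s, |a i| ^ p) ^ (1 / p) ≤ ‖∑ i ∈ s, a i • F i‖ ∧
      ‖∑ i ∈ s, a i • F i‖ ≤ C * (∑ i ∈ s, |a i| ^ p) ^ (1 / p) :=
  unconditional_translates_equiv_lp_basis_general p hp hp2 f hf lam F hF hunc
end

section
/- Let 1 ≤ p < ∞ with p ≠ 2, and let X be a closed subspace of L_p(ℝ) containing no isomorphic copy of ℓ_p, i.e. there are no constants 0 < c ≤ C and a linear map T : ℓ_p → L_p(ℝ) with range contained in X such that c‖x‖ ≤ ‖Tx‖ ≤ C‖x‖ for all x ∈ ℓ_p. Then there exist c > 0 and K < ∞ such that ‖f‖_p ≤ K ‖f · χ_{[−c,c]}‖_p for all f ∈ X; that is, f ↦ ‖f restricted to [−c,c]‖_p is an equivalent norm on X. -/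
/-!
If no restriction norm were equivalent, `X` would contain unit vectors with arbitrarily small
mass on any given `[-a, a]`; each of them also has small mass outside some larger interval. A
gliding hump then produces unit vectors `g k ∈ X` that are summably small perturbations of
functions `h k` supported on disjoint annuli. Disjointly supported functions of norm close to `1`
span `ℓ_p` with good constants, hence so do the `g k`, and summing `∑ x k • g k` embeds `ℓ_p`
into the closed subspace `X`.
-/

open MeasureTheory ENNReal Filter Topology Function

section EquivLpBasis

variable {E : Type*} [NormedAddCommGroup E] [NormedSpace ℝ E]

/-- `g` is equivalent to the unit vector basis of `ℓ_q`, with lower constant `a` and upper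
constant `b`. -/
def IsEquivLpBasis (q a b : ℝ) (g : ℕ → E) : Prop :=
  ∀ (x : ℕ → ℝ) (F : Finset ℕ),
    a * (∑ k ∈ F, |x k| ^ q) ^ (1 / q) ≤ ‖∑ k ∈ F, x k • g k‖ ∧
      ‖∑ k ∈ F, x k • g k‖ ≤ b * (∑ k ∈ F, |x k| ^ q) ^ (1 / q)

theorem abs_le_sum_rpow_rpow_one_div {ι : Type*} {q : ℝ} (hq : 0 < q) (x : ι → ℝ)
    {F : Finset ι} {k : ι} (hk : k ∈ F) : |x k| ≤ (∑ j ∈ F, |x j| ^ q) ^ (1 / q) :=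
  calc |x k| = (|x k| ^ q) ^ (1 / q) := by
        rw [← Real.rpow_mul (abs_nonneg _), mul_one_div_cancel hq.ne', Real.rpow_one]
    _ ≤ _ := Real.rpow_le_rpow (by positivity)
        (Finset.single_le_sum (f := fun j => |x j| ^ q) (fun j _ => by positivity) hk)
        (by positivity)

theorem IsEquivLpBasis.of_sum_norm_sub_le {q a b δ : ℝ} (hq : 0 < q) {g h : ℕ → E}
    (hh : IsEquivLpBasis q a b h) (hgh : ∀ F : Finset ℕ, ∑ k ∈ F, ‖g k - h k‖ ≤ δ) :
    IsEquivLpBasis q (a - δ) (b + δ) g := by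
  intro x F
  obtain ⟨hlo, hhi⟩ := hh x F
  set N := (∑ k ∈ F, |x k| ^ q) ^ (1 / q)
  have herr : ‖∑ k ∈ F, x k • (g k - h k)‖ ≤ δ * N :=
    calc ‖∑ k ∈ F, x k • (g k - h k)‖ ≤ ∑ k ∈ F, |x k| * ‖g k - h k‖ := by
          simpa only [norm_smul, Real.norm_eq_abs] using
            norm_sum_le F fun k => x k • (g k - h k)
      _ ≤ ∑ k ∈ F, N * ‖g k - h k‖ := Finset.sum_le_sum fun k hk =>
          mul_le_mul_of_nonneg_right (abs_le_sum_rpow_rpow_one_div hq x hk) (norm_nonneg _)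
      _ ≤ δ * N := by
          rw [← Finset.mul_sum, mul_comm]
          exact mul_le_mul_of_nonneg_right (hgh F) (by positivity)
  have hsplit :
      ∑ k ∈ F, x k • g k = ∑ k ∈ F, x k • h k + ∑ k ∈ F, x k • (g k - h k) := by
    rw [← Finset.sum_add_distrib]
    simp only [smul_sub, add_sub_cancel]
  rw [hsplit]
  constructor
  · have := norm_sub_le (∑ k ∈ F, x k • h k + ∑ k ∈ F, x k • (g k - h k))
      (∑ k ∈ F, x k • (g k - h k))
    rw [add_sub_cancel_right] at this
    linarith
  · linarith [norm_add_le (∑ k ∈ F, x k • h k) (∑ k ∈ F, x k • (g k - h k))]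

variable {p : ℝ≥0∞} [Fact (1 ≤ p)]

theorem lp.tendsto_sum_range_rpow (hp : p ≠ ∞) (x : lp (fun _ : ℕ => ℝ) p) :
    Tendsto (fun n => (∑ k ∈ Finset.range n, |x k| ^ p.toReal) ^ (1 / p.toReal)) atTop
      (𝓝 ‖x‖) := by
  have hq : 0 < p.toReal := (ENNReal.toReal_pos_iff_ne_top p).2 hp
  have hsum : Summable fun k => |x k| ^ p.toReal := by
    simpa only [Real.norm_eq_abs] using (memℓp_gen_iff hq).mp (lp.memℓp x)
  rw [lp.norm_eq_tsum_rpow hq x]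
  simp only [Real.norm_eq_abs]
  exact hsum.hasSum.tendsto_sum_nat.rpow_const (Or.inr (by positivity))

theorem IsEquivLpBasis.summable_smul [CompleteSpace E] (hp : p ≠ ∞) {a b : ℝ} {g : ℕ → E}
    (hg : IsEquivLpBasis p.toReal a b g) (x : lp (fun _ : ℕ => ℝ) p) :
    Summable fun k => x k • g k := by
  set q := p.toReal
  have hq : 0 < q := (ENNReal.toReal_pos_iff_ne_top p).2 hp
  have hsum : Summable fun k => |x k| ^ q := by
    simpa only [Real.norm_eq_abs] using (memℓp_gen_iff hq).mp (lp.memℓp x)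
  rw [summable_iff_vanishing_norm]
  intro ε hε
  set C := |b| + 1
  have hC : 0 < C := by positivity
  obtain ⟨s, hs⟩ := summable_iff_vanishing_norm.mp hsum ((ε / C) ^ q) (by positivity)
  refine ⟨s, fun t ht => ?_⟩
  have hnn : 0 ≤ ∑ k ∈ t, |x k| ^ q := by positivity
  have htail : (∑ k ∈ t, |x k| ^ q) ^ (1 / q) < ε / C :=
    calc (∑ k ∈ t, |x k| ^ q) ^ (1 / q) < ((ε / C) ^ q) ^ (1 / q) := by
          refine Real.rpow_lt_rpow hnn ?_ (by positivity)
          simpa only [Real.norm_of_nonneg hnn] using hs t ht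
      _ = ε / C := by
          rw [← Real.rpow_mul (by positivity), mul_one_div_cancel hq.ne', Real.rpow_one]
  calc ‖∑ k ∈ t, x k • g k‖ ≤ b * (∑ k ∈ t, |x k| ^ q) ^ (1 / q) := (hg x t).2
    _ ≤ C * (∑ k ∈ t, |x k| ^ q) ^ (1 / q) :=
        mul_le_mul_of_nonneg_right (by linarith [le_abs_self b]) (by positivity)
    _ < C * (ε / C) := mul_lt_mul_of_pos_left htail hC
    _ = ε := mul_div_cancel₀ ε hC.ne'

theorem IsEquivLpBasis.exists_lp_embedding [CompleteSpace E] (hp : p ≠ ∞) {a b : ℝ}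
    {g : ℕ → E} (hg : IsEquivLpBasis p.toReal a b g) :
    ∃ T : lp (fun _ : ℕ => ℝ) p →ₗ[ℝ] E,
      (∀ x, T x ∈ (Submodule.span ℝ (Set.range g)).topologicalClosure) ∧
        ∀ x, a * ‖x‖ ≤ ‖T x‖ ∧ ‖T x‖ ≤ b * ‖x‖ := by
  have hsum := hg.summable_smul hp
  let T : lp (fun _ : ℕ => ℝ) p →ₗ[ℝ] E :=
    { toFun := fun x => ∑' k, x k • g k
      map_add' := fun x y => by
        simp only [lp.coeFn_add, Pi.add_apply, add_smul, (hsum x).tsum_add (hsum y)]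
      map_smul' := fun c x => by
        simp only [lp.coeFn_smul, Pi.smul_apply, smul_eq_mul, mul_smul, RingHom.id_apply,
          (hsum x).tsum_const_smul c] }
  refine ⟨T, fun x => ?_, fun x => ?_⟩
  · refine (Submodule.isClosed_topologicalClosure _).mem_of_tendsto (hsum x).hasSum
      (Eventually.of_forall fun F => Submodule.le_topologicalClosure _ ?_)
    exact Submodule.sum_mem _ fun k _ =>
      Submodule.smul_mem _ _ (Submodule.subset_span ⟨k, rfl⟩)
  · have hS : Tendsto (fun n => ‖∑ k ∈ Finset.range n, x k • g k‖) atTop (𝓝 ‖T x‖) :=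
      (hsum x).hasSum.tendsto_sum_nat.norm
    have hN := lp.tendsto_sum_range_rpow hp x
    exact ⟨le_of_tendsto_of_tendsto' (hN.const_mul a) hS fun n => (hg x _).1,
      le_of_tendsto_of_tendsto' hS (hN.const_mul b) fun n => (hg x _).2⟩

end EquivLpBasis

section DisjointSupport

variable {α ι E : Type*} [MeasurableSpace α] {μ : Measure α} [NormedAddCommGroup E]
  {p : ℝ≥0∞} {s : Set α}

theorem enorm_sum_rpow_of_pairwise_eq_zero {q : ℝ} (hq : 0 < q) {F : Finset ι} {y : ι → E}
    (hy : (F : Set ι).Pairwise fun i j => y i = 0 ∨ y j = 0) :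
    ‖∑ k ∈ F, y k‖ₑ ^ q = ∑ k ∈ F, ‖y k‖ₑ ^ q := by
  by_cases h : ∃ j ∈ F, y j ≠ 0
  · obtain ⟨j, hj, hyj⟩ := h
    have hzero : ∀ i ∈ F, i ≠ j → y i = 0 := fun i hi hij => (hy hi hj hij).resolve_right hyj
    rw [Finset.sum_eq_single_of_mem j hj hzero, Finset.sum_eq_single_of_mem j hj
      fun i hi hij => by simp [hzero i hi hij, ENNReal.zero_rpow_of_pos hq]]
  · push Not at h
    rw [Finset.sum_eq_zero h, Finset.sum_eq_zero fun k hk => by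
      simp [h k hk, ENNReal.zero_rpow_of_pos hq]]
    simp [ENNReal.zero_rpow_of_pos hq]

theorem eLpNorm_rpow_eq_lintegral (hp0 : p ≠ 0) (hp : p ≠ ∞) (f : α → E) :
    eLpNorm f p μ ^ p.toReal = ∫⁻ t, ‖f t‖ₑ ^ p.toReal ∂μ := by
  rw [eLpNorm_eq_lintegral_rpow_enorm_toReal hp0 hp, one_div,
    ENNReal.rpow_inv_rpow (ENNReal.toReal_pos hp0 hp).ne']

theorem eLpNorm_finset_sum_rpow_of_ae_disjoint (hp0 : p ≠ 0) (hp : p ≠ ∞) {u : ι → α → E}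
    (hu : ∀ k, AEStronglyMeasurable (u k) μ)
    (hdisj : Pairwise fun i j => ∀ᵐ t ∂μ, u i t = 0 ∨ u j t = 0) (F : Finset ι) :
    eLpNorm (∑ k ∈ F, u k) p μ ^ p.toReal = ∑ k ∈ F, eLpNorm (u k) p μ ^ p.toReal := by
  have hae : ∀ᵐ t ∂μ, (F : Set ι).Pairwise fun i j => u i t = 0 ∨ u j t = 0 :=
    (eventually_all_finset F).2 fun i _ => (eventually_all_finset F).2 fun j _ => by
      rcases eq_or_ne i j with rfl | hij
      · exact .of_forall fun _ h => absurd rfl h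
      · exact (hdisj hij).mono fun _ ht _ => ht
  simp only [eLpNorm_rpow_eq_lintegral hp0 hp]
  rw [← lintegral_finsetSum' _ fun k _ => (hu k).enorm.pow_const _]
  refine lintegral_congr_ae ?_
  filter_upwards [hae] with t ht
  simpa only [Finset.sum_apply] using
    enorm_sum_rpow_of_pairwise_eq_zero (ENNReal.toReal_pos hp0 hp) ht

theorem eLpNorm_indicator_compl_diff_le (hp : 1 ≤ p) {S T : Set α} (hST : S ⊆ T)
    (hS : MeasurableSet S) (hT : MeasurableSet T) {f : α → E}
    (hf : AEStronglyMeasurable f μ) :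
    eLpNorm ((T \ S)ᶜ.indicator f) p μ ≤
      eLpNorm (S.indicator f) p μ + eLpNorm (Tᶜ.indicator f) p μ := by
  rw [Set.compl_sdiff, Set.indicator_union_of_disjoint
    (Set.disjoint_compl_right_iff_subset.2 hST)]
  exact eLpNorm_add_le (hf.indicator hS) (hf.indicator hT.compl) hp

namespace MeasureTheory.Lp

noncomputable def indicator (hs : MeasurableSet s) (f : Lp E p μ) : Lp E p μ :=
  ((Lp.memLp f).indicator hs).toLp (s.indicator f)

theorem coeFn_indicator (hs : MeasurableSet s) (f : Lp E p μ) :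
    ⇑(indicator hs f) =ᵐ[μ] s.indicator f :=
  MemLp.coeFn_toLp _

theorem norm_indicator_le (hs : MeasurableSet s) (f : Lp E p μ) : ‖indicator hs f‖ ≤ ‖f‖ := by
  rw [Lp.norm_def, Lp.norm_def, eLpNorm_congr_ae (coeFn_indicator hs f)]
  exact ENNReal.toReal_mono (Lp.eLpNorm_ne_top f) (eLpNorm_indicator_le _)

theorem norm_sub_indicator (hs : MeasurableSet s) (f : Lp E p μ) :
    ‖f - indicator hs f‖ = (eLpNorm (sᶜ.indicator f) p μ).toReal := by
  rw [Lp.norm_def, Set.indicator_compl]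
  refine congrArg ENNReal.toReal (eLpNorm_congr_ae ?_)
  filter_upwards [Lp.coeFn_sub f (indicator hs f), coeFn_indicator hs f] with t h1 h2
  rw [h1, Pi.sub_apply, h2, Pi.sub_apply]

theorem indicator_ae_disjoint {A : ι → Set α} (hA : ∀ k, MeasurableSet (A k))
    (hdisj : Pairwise (Disjoint on A)) (f : ι → Lp E p μ) :
    Pairwise fun i j =>
      ∀ᵐ t ∂μ, indicator (hA i) (f i) t = 0 ∨ indicator (hA j) (f j) t = 0 :=
  fun i j hij => by
    filter_upwards [coeFn_indicator (hA i) (f i), coeFn_indicator (hA j) (f j)] with t hi hj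
    rw [hi, hj]
    by_cases ht : t ∈ A i
    · exact Or.inr (Set.indicator_of_notMem (Set.disjoint_left.1 (hdisj hij) ht) _)
    · exact Or.inl (Set.indicator_of_notMem ht _)

variable [Fact (1 ≤ p)]

theorem norm_finset_sum_rpow_of_ae_disjoint (hp : p ≠ ∞) {h : ι → Lp E p μ}
    (hdisj : Pairwise fun i j => ∀ᵐ t ∂μ, h i t = 0 ∨ h j t = 0) (F : Finset ι) :
    ‖∑ k ∈ F, h k‖ ^ p.toReal = ∑ k ∈ F, ‖h k‖ ^ p.toReal := by
  have hp0 : p ≠ 0 := (zero_lt_one.trans_le Fact.out).ne'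
  have hsum : eLpNorm (⇑(∑ k ∈ F, h k)) p μ ^ p.toReal =
      ∑ k ∈ F, eLpNorm (h k) p μ ^ p.toReal := by
    rw [eLpNorm_congr_ae (Lp.coeFn_finsetSum F h),
      eLpNorm_finset_sum_rpow_of_ae_disjoint hp0 hp (fun k => Lp.aestronglyMeasurable (h k)) hdisj]
  rw [Lp.norm_def, ENNReal.toReal_rpow, hsum, ENNReal.toReal_sum fun k _ =>
    (ENNReal.rpow_lt_top_of_nonneg ENNReal.toReal_nonneg (Lp.eLpNorm_ne_top (h k))).ne]
  exact Finset.sum_congr rfl fun k _ => by rw [← ENNReal.toReal_rpow, Lp.norm_def]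

theorem isEquivLpBasis_of_ae_disjoint [NormedSpace ℝ E] (hp : p ≠ ∞) {h : ℕ → Lp E p μ}
    (hdisj : Pairwise fun i j => ∀ᵐ t ∂μ, h i t = 0 ∨ h j t = 0) {a b : ℝ} (ha : 0 ≤ a)
    (hha : ∀ k, a ≤ ‖h k‖) (hhb : ∀ k, ‖h k‖ ≤ b) : IsEquivLpBasis p.toReal a b h := by
  intro x F
  set q := p.toReal
  have hq : 0 < q := (ENNReal.toReal_pos_iff_ne_top p).2 hp
  have hdisj' : Pairwise fun i j => ∀ᵐ t ∂μ, (x i • h i) t = 0 ∨ (x j • h j) t = 0 :=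
    fun i j hij => by
      filter_upwards [hdisj hij, Lp.coeFn_smul (x i) (h i), Lp.coeFn_smul (x j) (h j)]
        with t ht hi hj
      rw [hi, hj, Pi.smul_apply, Pi.smul_apply]
      rcases ht with ht | ht <;> simp [ht]
  have hnorm : ‖∑ k ∈ F, x k • h k‖ = (∑ k ∈ F, |x k| ^ q * ‖h k‖ ^ q) ^ (1 / q) := by
    have hpow : ‖∑ k ∈ F, x k • h k‖ ^ q = ∑ k ∈ F, |x k| ^ q * ‖h k‖ ^ q := by
      rw [norm_finset_sum_rpow_of_ae_disjoint hp hdisj' F]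
      refine Finset.sum_congr rfl fun k _ => ?_
      rw [norm_smul, Real.norm_eq_abs, Real.mul_rpow (abs_nonneg _) (norm_nonneg _)]
    rw [← hpow, ← Real.rpow_mul (norm_nonneg _), mul_one_div_cancel hq.ne', Real.rpow_one]
  have hconst : ∀ c : ℝ, 0 ≤ c →
      c * (∑ k ∈ F, |x k| ^ q) ^ (1 / q) = (∑ k ∈ F, |x k| ^ q * c ^ q) ^ (1 / q) := by
    intro c hc
    rw [← Finset.sum_mul, Real.mul_rpow (by positivity) (by positivity), ← Real.rpow_mul hc,
      mul_one_div_cancel hq.ne', Real.rpow_one, mul_comm]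
  have hb : 0 ≤ b := (norm_nonneg _).trans (hhb 0)
  rw [hconst a ha, hconst b hb, hnorm]
  have hmono : ∀ c d : ℕ → ℝ, (∀ k, 0 ≤ c k) → (∀ k, c k ≤ d k) →
      (∑ k ∈ F, |x k| ^ q * c k ^ q) ^ (1 / q) ≤ (∑ k ∈ F, |x k| ^ q * d k ^ q) ^ (1 / q) :=
    fun c d hc hcd => Real.rpow_le_rpow
      (Finset.sum_nonneg fun k _ => by have := hc k; positivity)
      (Finset.sum_le_sum fun k _ =>
        mul_le_mul_of_nonneg_left (Real.rpow_le_rpow (hc k) (hcd k) hq.le) (by positivity))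
      (by positivity)
  exact ⟨hmono (fun _ => a) (fun k => ‖h k‖) (fun _ => ha) hha,
    hmono (fun k => ‖h k‖) (fun _ => b) (fun _ => norm_nonneg _) hhb⟩

end MeasureTheory.Lp

end DisjointSupport

theorem Monotone.pairwise_disjoint_on_diff_succ {α : Type*} {S : ℕ → Set α} (hS : Monotone S) :
    Pairwise (Disjoint on fun k => S (k + 1) \ S k) :=
  (pairwise_disjoint_on _).2 fun _ _ hmn =>
    Set.disjoint_left.2 fun _ htm htn => htn.2 (hS hmn htm.1)

theorem tendsto_eLpNorm_indicator_compl_Icc {E : Type*} [NormedAddCommGroup E] {p : ℝ≥0∞}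
    (hp : p ≠ ∞) {f : ℝ → E} (hf : MemLp f p volume) :
    Tendsto (fun r : ℝ => eLpNorm ((Set.Icc (-r) r)ᶜ.indicator f) p volume) atTop (𝓝 0) := by
  rcases eq_or_ne p 0 with rfl | hp0
  · simp
  set q := p.toReal
  have hq : 0 < q := ENNReal.toReal_pos hp0 hp
  set ν := volume.withDensity fun t => ‖f t‖ₑ ^ q
  have hν : ∀ r : ℝ,
      eLpNorm ((Set.Icc (-r) r)ᶜ.indicator f) p volume = ν (Set.Icc (-r) r)ᶜ ^ (1 / q) :=
    fun r => by
      rw [eLpNorm_indicator_eq_eLpNorm_restrict measurableSet_Icc.compl,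
        eLpNorm_eq_lintegral_rpow_enorm_toReal hp0 hp,
        withDensity_apply _ measurableSet_Icc.compl]
  have hfin : ν Set.univ ≠ ∞ := by
    rw [withDensity_apply _ MeasurableSet.univ, Measure.restrict_univ]
    exact (lintegral_rpow_enorm_lt_top_of_eLpNorm_lt_top hp0 hp hf.eLpNorm_lt_top).ne
  have hanti : Antitone fun r : ℝ => (Set.Icc (-r) r)ᶜ := fun r r' hrr' =>
    Set.compl_subset_compl.2 (Set.Icc_subset_Icc (neg_le_neg hrr') hrr')
  have hempty : ⋂ r : ℝ, (Set.Icc (-r) r)ᶜ = ∅ :=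
    Set.eq_empty_of_forall_notMem fun t ht =>
      Set.mem_iInter.1 ht |t| ⟨neg_abs_le t, le_abs_self t⟩
  have hlim := tendsto_measure_iInter_atTop (μ := ν)
    (fun r => measurableSet_Icc.compl.nullMeasurableSet) hanti
    ⟨0, ne_top_of_le_ne_top hfin (measure_mono (Set.subset_univ _))⟩
  rw [hempty, measure_empty] at hlim
  simpa only [hν, Function.comp_apply, ENNReal.zero_rpow_of_pos (one_div_pos.2 hq)] using
    hlim.ennrpow_const (1 / q)

section RealLine

variable {p : ℝ≥0∞} {X : Submodule ℝ (Lp ℝ p (volume : Measure ℝ))}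

theorem exists_seq_small_on_Icc_and_off_Icc (hp : p ≠ ∞)
    (hsmall : ∀ (a : ℝ) {ε : ℝ}, 0 < ε → ∃ g ∈ X, ‖g‖ = 1 ∧
      eLpNorm ((Set.Icc (-a) a).indicator (g : ℝ → ℝ)) p volume < .ofReal ε)
    {e : ℕ → ℝ} (he : ∀ k, 0 < e k) :
    ∃ (g : ℕ → Lp ℝ p (volume : Measure ℝ)) (r : ℕ → ℝ), Monotone r ∧ ∀ k, g k ∈ X ∧
      ‖g k‖ = 1 ∧
      eLpNorm ((Set.Icc (-r k) (r k)).indicator (g k)) p volume < .ofReal (e k) ∧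
      eLpNorm ((Set.Icc (-r (k + 1)) (r (k + 1)))ᶜ.indicator (g k)) p volume < .ofReal (e k) := by
  have hstep (k : ℕ) (a : ℝ) : ∃ (g : Lp ℝ p (volume : Measure ℝ)) (b : ℝ), a ≤ b ∧ g ∈ X ∧
      ‖g‖ = 1 ∧ eLpNorm ((Set.Icc (-a) a).indicator g) p volume < .ofReal (e k) ∧
      eLpNorm ((Set.Icc (-b) b)ᶜ.indicator g) p volume < .ofReal (e k) := by
    obtain ⟨g, hgX, hg1, hga⟩ := hsmall a (he k)
    obtain ⟨b, hgb, hab⟩ := (((tendsto_eLpNorm_indicator_compl_Icc hp (Lp.memLp g)).eventually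
      (gt_mem_nhds (ENNReal.ofReal_pos.2 (he k)))).and (eventually_ge_atTop a)).exists
    exact ⟨g, b, hab, hgX, hg1, hga, hgb⟩
  choose g b hab hg using hstep
  let r : ℕ → ℝ := fun k => Nat.rec 0 (fun k a => b k a) k
  exact ⟨fun k => g k (r k), r, monotone_nat_of_le_succ fun k => hab k (r k),
    fun k => hg k (r k)⟩

variable [Fact (1 ≤ p)]

theorem exists_norm_eq_one_eLpNorm_indicator_Icc_lt
    (hX : ∀ c > (0 : ℝ), ∀ K : ℝ, ∃ f ∈ X,
      K * (eLpNorm ((Set.Icc (-c) c).indicator (f : ℝ → ℝ)) p volume).toReal < ‖f‖)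
    (a : ℝ) {ε : ℝ} (hε : 0 < ε) :
    ∃ g ∈ X, ‖g‖ = 1 ∧
      eLpNorm ((Set.Icc (-a) a).indicator (g : ℝ → ℝ)) p volume < .ofReal ε := by
  set c := max a 1
  obtain ⟨f, hfX, hf⟩ := hX c (lt_max_of_lt_right one_pos) ε⁻¹
  have hfpos : 0 < ‖f‖ := lt_of_le_of_lt (by positivity) hf
  refine ⟨‖f‖⁻¹ • f, X.smul_mem _ hfX, by rw [norm_smul, norm_inv, norm_norm,
    inv_mul_cancel₀ hfpos.ne'], ?_⟩
  have hfin : eLpNorm ((Set.Icc (-c) c).indicator f) p volume ≠ ∞ :=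
    (eLpNorm_indicator_le _).trans_lt (Lp.eLpNorm_lt_top f) |>.ne
  have hsmul : (Set.Icc (-c) c).indicator ⇑(‖f‖⁻¹ • f) =ᵐ[volume]
      ‖f‖⁻¹ • (Set.Icc (-c) c).indicator f := by
    filter_upwards [Lp.coeFn_smul ‖f‖⁻¹ f] with t ht
    rw [Pi.smul_apply, Set.indicator_apply, Set.indicator_apply, ht]
    split_ifs <;> simp
  calc eLpNorm ((Set.Icc (-a) a).indicator ⇑(‖f‖⁻¹ • f)) p volume
      ≤ eLpNorm ((Set.Icc (-c) c).indicator ⇑(‖f‖⁻¹ • f)) p volume :=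
        eLpNorm_mono fun t => norm_indicator_le_of_subset
          (Set.Icc_subset_Icc (neg_le_neg (le_max_left a 1)) (le_max_left a 1)) _ t
    _ = .ofReal (‖f‖⁻¹ * (eLpNorm ((Set.Icc (-c) c).indicator f) p volume).toReal) := by
        rw [eLpNorm_congr_ae hsmul, eLpNorm_const_smul, ENNReal.ofReal_mul (by positivity),
          ENNReal.ofReal_toReal hfin, Real.enorm_of_nonneg (by positivity)]
    _ < .ofReal ε := by
        refine (ENNReal.ofReal_lt_ofReal_iff hε).2 ?_
        rw [inv_mul_lt_iff₀ hfpos]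
        rwa [inv_mul_lt_iff₀ hε, mul_comm] at hf

theorem exists_isEquivLpBasis_of_forall_exists_small_on_Icc (hp : p ≠ ∞)
    (hsmall : ∀ (a : ℝ) {ε : ℝ}, 0 < ε → ∃ g ∈ X, ‖g‖ = 1 ∧
      eLpNorm ((Set.Icc (-a) a).indicator (g : ℝ → ℝ)) p volume < .ofReal ε) :
    ∃ g : ℕ → Lp ℝ p (volume : Measure ℝ), (∀ k, g k ∈ X) ∧
      IsEquivLpBasis p.toReal (5 / 8) (5 / 4) g := by
  obtain ⟨g, r, hr, hg⟩ := exists_seq_small_on_Icc_and_off_Icc hp hsmall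
    (e := fun k => 1 / 16 * (1 / 2) ^ k) fun k => by positivity
  set I : ℕ → Set ℝ := fun k => Set.Icc (-r k) (r k)
  have hI : Monotone I := fun m n hmn => Set.Icc_subset_Icc (neg_le_neg (hr hmn)) (hr hmn)
  have hA : ∀ k, MeasurableSet (I (k + 1) \ I k) := fun k =>
    measurableSet_Icc.diff measurableSet_Icc
  set h := fun k => Lp.indicator (hA k) (g k)
  have hgh : ∀ k, ‖g k - h k‖ ≤ 1 / 8 * (1 / 2) ^ k := by
    intro k
    rw [Lp.norm_sub_indicator]
    refine ENNReal.toReal_le_of_le_ofReal (by positivity) ?_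
    calc _ ≤ _ := eLpNorm_indicator_compl_diff_le Fact.out (hI k.le_succ) measurableSet_Icc
          measurableSet_Icc (Lp.aestronglyMeasurable (g k))
      _ ≤ _ := add_le_add (hg k).2.2.1.le (hg k).2.2.2.le
      _ = .ofReal (1 / 8 * (1 / 2) ^ k) := by
          rw [← ENNReal.ofReal_add (by positivity) (by positivity)]
          ring_nf
  have hh : IsEquivLpBasis p.toReal (7 / 8) 1 h := by
    refine Lp.isEquivLpBasis_of_ae_disjoint hp
      (Lp.indicator_ae_disjoint hA hI.pairwise_disjoint_on_diff_succ g) (by norm_num)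
      (fun k => ?_) fun k => (Lp.norm_indicator_le _ _).trans (hg k).2.1.le
    have h1 : ‖g k‖ ≤ ‖h k‖ + ‖g k - h k‖ := norm_le_insert' _ _
    have h2 : (1 / 2 : ℝ) ^ k ≤ 1 := pow_le_one₀ (by norm_num) (by norm_num)
    linarith [(hg k).2.1, hgh k]
  have hsum : ∀ F : Finset ℕ, ∑ k ∈ F, ‖g k - h k‖ ≤ 1 / 4 := fun F =>
    calc ∑ k ∈ F, ‖g k - h k‖ ≤ ∑ k ∈ F, 1 / 8 * (1 / 2 : ℝ) ^ k :=
          Finset.sum_le_sum fun k _ => hgh k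
      _ ≤ ∑' k, 1 / 8 * (1 / 2 : ℝ) ^ k :=
          (summable_geometric_two.mul_left _).sum_le_tsum F fun k _ => by positivity
      _ = 1 / 4 := by rw [tsum_mul_left, tsum_geometric_two]; norm_num
  refine ⟨g, fun k => (hg k).1, ?_⟩
  convert hh.of_sum_norm_sub_le ((ENNReal.toReal_pos_iff_ne_top p).2 hp) hsum using 1 <;> norm_num

end RealLine

theorem restriction_equivalent_norm_of_no_lp_copy_general
    (p : ℝ≥0∞) [Fact (1 ≤ p)] (hp' : p ≠ ∞)
    (X : Submodule ℝ (Lp ℝ p (volume : Measure ℝ)))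
    (hX : IsClosed (X : Set (Lp ℝ p (volume : Measure ℝ))))
    (hnolp : ¬ ∃ (c C : ℝ), 0 < c ∧ c ≤ C ∧
      ∃ T : lp (fun _ : ℕ => ℝ) p →ₗ[ℝ] Lp ℝ p (volume : Measure ℝ),
        (∀ x, T x ∈ X) ∧ ∀ x, c * ‖x‖ ≤ ‖T x‖ ∧ ‖T x‖ ≤ C * ‖x‖) :
    ∃ c > (0 : ℝ), ∃ K : ℝ, ∀ f ∈ X,
      ‖f‖ ≤ K * (eLpNorm ((Set.Icc (-c) c).indicator (f : ℝ → ℝ)) p volume).toReal := by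
  by_contra hcon
  push Not at hcon
  obtain ⟨g, hgX, hg⟩ := exists_isEquivLpBasis_of_forall_exists_small_on_Icc hp'
    fun a _ hε => exists_norm_eq_one_eLpNorm_indicator_Icc_lt hcon a hε
  obtain ⟨T, hTg, hT⟩ := hg.exists_lp_embedding hp'
  have hspan : (Submodule.span ℝ (Set.range g)).topologicalClosure ≤ X :=
    Submodule.topologicalClosure_minimal _
      (Submodule.span_le.2 (Set.range_subset_iff.2 hgX)) hX
  exact hnolp ⟨5 / 8, 5 / 4, by norm_num, by norm_num, T, fun x => hspan (hTg x), hT⟩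

/-- Let `1 ≤ p < ∞`, `p ≠ 2`, and let `X` be a closed subspace of `L_p(ℝ)`
containing no isomorphic copy of `ℓ_p`.  Then for some `c > 0` the restriction
norm `f ↦ ‖f·χ_[−c,c]‖_p` is an equivalent norm on `X`. -/
theorem restriction_equivalent_norm_of_no_lp_copy
    (p : ℝ≥0∞) [Fact (1 ≤ p)] (hp : 1 ≤ p) (hp' : p ≠ ∞) (hp2 : p ≠ 2)
    (X : Submodule ℝ (Lp ℝ p (volume : Measure ℝ)))
    (hX : IsClosed (X : Set (Lp ℝ p (volume : Measure ℝ))))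
    (hnolp : ¬ ∃ (c C : ℝ), 0 < c ∧ c ≤ C ∧
      ∃ T : lp (fun _ : ℕ => ℝ) p →ₗ[ℝ] Lp ℝ p (volume : Measure ℝ),
        (∀ x, T x ∈ X) ∧ ∀ x, c * ‖x‖ ≤ ‖T x‖ ∧ ‖T x‖ ≤ C * ‖x‖) :
    ∃ c > (0 : ℝ), ∃ K : ℝ, ∀ f ∈ X,
      ‖f‖ ≤ K * (eLpNorm ((Set.Icc (-c) c).indicator (f : ℝ → ℝ)) p volume).toReal :=
  restriction_equivalent_norm_of_no_lp_copy_general p hp' X hX hnolp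
end

section
/- Let 1 ≤ p ≤ 2 and let x ∈ ℓ_p(ℤ; ℂ). For n ∈ ℤ define the shifted sequence x^(n) ∈ ℓ_p(ℤ; ℂ) by x^(n)(j) = x(j − n). Then the closed linear span of {x^(2n) : n ∈ ℤ} (the shifts by even integers) is a proper subspace of ℓ_p(ℤ; ℂ). -/
/-!
For `x : ℤ → ℂ` put `c j = (-1)^j x(1 - j)`. The substitution `j ↦ 1 + 2n - j` turns
`∑ j, c j * x(j - 2n)` into its own negative, since `1 + 2n` is odd; so `y ↦ ∑ j, c j * y j`
vanishes on every even shift of `x`. For `p ≤ 2` the sequence `c` lies in `ℓ_p ⊆ ℓ_{p'}`, where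
`p'` is the conjugate exponent, so by Hölder this is a continuous functional on `ℓ_p`, nonzero
when `x ≠ 0`, and the closed span of the even shifts lies in its kernel.
-/

open ENNReal

def alternatingReflect {E : Type*} [AddCommGroup E] (x : ℤ → E) (j : ℤ) : E :=
  j.negOnePow • x (1 - j)

theorem alternatingReflect_ne_zero {E : Type*} [AddCommGroup E] {x : ℤ → E} (hx : x ≠ 0) :
    alternatingReflect x ≠ 0 := by
  contrapose! hx
  funext m
  simpa [alternatingReflect, smul_eq_zero_iff_eq] using congrFun hx (1 - m)

theorem tsum_alternatingReflect_mul_sub_two_mul_eq_zero {R : Type*} [CommRing R]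
    [TopologicalSpace R] [IsTopologicalAddGroup R] [T2Space R] [IsAddTorsionFree R]
    (x : ℤ → R) (n : ℤ) : ∑' j, alternatingReflect x j * x (j - 2 * n) = 0 := by
  rw [← self_eq_neg]
  calc ∑' j, alternatingReflect x j * x (j - 2 * n)
      = ∑' j, alternatingReflect x (1 + 2 * n - j) * x (1 + 2 * n - j - 2 * n) :=
        ((Equiv.subLeft _).tsum_eq fun j => alternatingReflect x j * x (j - 2 * n)).symm
    _ = ∑' j, -(alternatingReflect x j * x (j - 2 * n)) := by
        refine tsum_congr fun j => ?_
        have hsign : (1 + 2 * n - j).negOnePow = -j.negOnePow := by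
          simp [Int.negOnePow_sub, Int.negOnePow_add, Int.negOnePow_two_mul]
        rw [alternatingReflect, alternatingReflect, hsign,
          show 1 - (1 + 2 * n - j) = j - 2 * n by ring, show 1 + 2 * n - j - 2 * n = 1 - j by ring,
          Units.neg_smul, neg_mul, smul_mul_assoc, smul_mul_assoc, mul_comm]
    _ = -∑' j, alternatingReflect x j * x (j - 2 * n) := tsum_neg

theorem Memℓp.comp_equiv {α β E : Type*} [NormedAddCommGroup E] {p : ℝ≥0∞} {f : α → E}
    (hf : Memℓp f p) (e : β ≃ α) : Memℓp (f ∘ e) p := by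
  obtain rfl | rfl | hp := p.trichotomy
  · exact memℓp_zero (hf.finite_dsupport.preimage e.injective.injOn)
  · refine memℓp_infty ?_
    rw [Function.comp_def, Set.range_comp' (fun i => ‖f i‖) e, e.surjective.range_eq,
      Set.image_univ]
    exact hf.bddAbove
  · exact memℓp_gen ((e.summable_iff (f := fun i => ‖f i‖ ^ p.toReal)).mpr (hf.summable hp))

theorem Memℓp.alternatingReflect {E : Type*} [NormedAddCommGroup E] {p : ℝ≥0∞} {x : ℤ → E}
    (hx : Memℓp x p) : Memℓp (alternatingReflect x) p := by
  refine (hx.comp_equiv (Equiv.subLeft 1)).mono' fun j => ?_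
  rcases Int.units_eq_one_or j.negOnePow with h | h <;> simp [_root_.alternatingReflect, h]

theorem ENNReal.HolderConjugate.le_of_le_two {p q : ℝ≥0∞} [p.HolderConjugate q] (hp : p ≤ 2) :
    p ≤ q := by
  rw [← ENNReal.inv_le_inv, ← HolderConjugate.one_sub_inv p q]
  calc 1 - p⁻¹ ≤ 1 - 2⁻¹ := by gcongr
    _ = 2⁻¹ := ENNReal.one_sub_inv_two
    _ ≤ p⁻¹ := by gcongr

instance {p : ℝ≥0∞} [Fact (1 ≤ p)] : Fact (1 ≤ conjExponent p) :=
  ⟨HolderConjugate.one_le _ p⟩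

theorem closure_span_ne_univ_of_forall_eq_zero {R E F : Type*} [Semiring R] [TopologicalSpace E]
    [AddCommMonoid E] [Module R E] [ContinuousConstSMul R E] [ContinuousAdd E]
    [TopologicalSpace F] [AddCommMonoid F] [Module R F] [T1Space F]
    {S : Set E} (φ : E →L[R] F) (hφ : φ ≠ 0) (hS : ∀ y ∈ S, φ y = 0) :
    closure (Submodule.span R S : Set E) ≠ Set.univ := by
  rw [← Submodule.topologicalClosure_coe, Ne, Submodule.coe_eq_univ]
  intro htop
  have hker : (Submodule.span R S).topologicalClosure ≤ LinearMap.ker (φ : E →ₗ[R] F) :=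
    Submodule.topologicalClosure_minimal _
      (Submodule.span_le.mpr fun y hy => LinearMap.mem_ker.mpr (hS y hy)) φ.isClosed_ker
  rw [htop, top_le_iff, LinearMap.ker_eq_top] at hker
  exact hφ (ContinuousLinearMap.coe_injective hker)

namespace lp

variable {α 𝕜 : Type*} [RCLike 𝕜] {p q : ℝ≥0∞} [Fact (1 ≤ p)] [Fact (1 ≤ q)]
  [q.HolderConjugate p]

variable (p) in
noncomputable def mulPairing (c : lp (fun _ : α => 𝕜) q) : lp (fun _ : α => 𝕜) p →L[𝕜] 𝕜 :=
  dualPairing q p (fun _ => ContinuousLinearMap.mul 𝕜 𝕜) (K := 1) (fun _ => by simp) c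

theorem mulPairing_apply (c : lp (fun _ : α => 𝕜) q) (y : lp (fun _ : α => 𝕜) p) :
    mulPairing p c y = ∑' i, c i * y i :=
  rfl

theorem mulPairing_single [DecidableEq α] (c : lp (fun _ : α => 𝕜) q) (i : α) :
    mulPairing p c (lp.single p i 1) = c i := by
  rw [mulPairing_apply, tsum_eq_single i fun j hj => by simp [hj]]
  simp

theorem mulPairing_ne_zero {c : lp (fun _ : α => 𝕜) q} (hc : c ≠ 0) : mulPairing p c ≠ 0 := by
  classical
  obtain ⟨i, hi⟩ : ∃ i, c i ≠ 0 := by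
    by_contra! h
    exact hc (lp.ext (funext h))
  intro h0
  exact hi (by simpa [h0] using (mulPairing_single (p := p) c i).symm)

end lp

theorem exists_ne_zero_tsum_mul_sub_two_mul_eq_zero {𝕜 : Type*} [RCLike 𝕜] {p q : ℝ≥0∞}
    (hpq : p ≤ q) (x : lp (fun _ : ℤ => 𝕜) p) :
    ∃ c : lp (fun _ : ℤ => 𝕜) q, c ≠ 0 ∧ ∀ n : ℤ, ∑' j, c j * x (j - 2 * n) = 0 := by
  by_cases hx : x = 0
  · refine ⟨lp.single q 0 1, fun h => ?_, fun n => by simp [hx]⟩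
    simpa using congrArg (fun c : lp (fun _ : ℤ => 𝕜) q => c 0) h
  · refine ⟨⟨alternatingReflect x, (lp.memℓp x).alternatingReflect.of_exponent_ge hpq⟩,
      fun h => alternatingReflect_ne_zero (fun h' => hx (lp.ext h')) (congrArg Subtype.val h),
      tsum_alternatingReflect_mul_sub_two_mul_eq_zero x⟩

theorem closed_span_even_shifts_ne_top_general
    (p : ℝ≥0∞) [Fact (1 ≤ p)] (hp2 : p ≤ 2)
    (x : lp (fun _ : ℤ => ℂ) p) :
    closure (Submodule.span ℂ {y : lp (fun _ : ℤ => ℂ) p |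
        ∃ n : ℤ, ∀ j : ℤ, y j = x (j - 2 * n)} :
      Set (lp (fun _ : ℤ => ℂ) p)) ≠ Set.univ := by
  obtain ⟨c, hc, hcx⟩ := exists_ne_zero_tsum_mul_sub_two_mul_eq_zero
    (HolderConjugate.le_of_le_two (q := conjExponent p) hp2) x
  refine closure_span_ne_univ_of_forall_eq_zero (lp.mulPairing p c) (lp.mulPairing_ne_zero hc) ?_
  rintro y ⟨n, hn⟩
  simp only [lp.mulPairing_apply, hn, hcx n]

/-- Let `1 ≤ p ≤ 2` and `x ∈ ℓ_p(ℤ;ℂ)`.  Then the closed linear span of the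
even shifts `{x^(2n) : n ∈ ℤ}` of `x` is a proper subspace of `ℓ_p(ℤ;ℂ)`. -/
theorem closed_span_even_shifts_ne_top
    (p : ℝ≥0∞) [Fact (1 ≤ p)] (hp : 1 ≤ p) (hp2 : p ≤ 2)
    (x : lp (fun _ : ℤ => ℂ) p) :
    closure (Submodule.span ℂ {y : lp (fun _ : ℤ => ℂ) p |
        ∃ n : ℤ, ∀ j : ℤ, y j = x (j - 2 * n)} :
      Set (lp (fun _ : ℤ => ℂ) p)) ≠ Set.univ :=
  closed_span_even_shifts_ne_top_general p hp2 x
end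

section
/- Let 1 ≤ p ≤ 2 and let X be a complex Banach space of dimension at least 2. Let F ∈ ℓ_p(ℤ; X) and for n ∈ ℤ define the shift F^(n) ∈ ℓ_p(ℤ; X) by F^(n)(j) = F(j − n). Then the closed linear span of {F^(n) : n ∈ ℤ} is a proper subspace of ℓ_p(ℤ; X). -/
open ENNReal

/-!
As `dim X ≥ 2`, for `F j ≠ 0` there is a continuous antisymmetric bilinear form `ω` on `X` with
`ω (F j) y ≠ 0` for some `y`. Since `p ≤ 2`, the exponent `p` is at most its conjugate `p'`, so
`j ↦ ω (F (-j))` lies in `ℓ_{p'}(ℤ; X*)` and `L G = ∑ⱼ ω (F (-j)) (G j)` is a continuous functional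
on `ℓ_p(ℤ; X)`, nonzero because `L (single (-j) y) = ω (F j) y`. On a shift `G = F^(n)` the
substitution `j ↦ n - j` together with antisymmetry turns `L G` into `-L G`, so `L` annihilates
every shift.
-/

theorem ENNReal.le_conjExponent_of_le_two {p : ℝ≥0∞} (hp : p ≤ 2) : p ≤ p.conjExponent := by
  have : 1 ≤ (p - 1)⁻¹ := ENNReal.one_le_inv.2 (tsub_le_iff_left.2 (by simpa [one_add_one_eq_two]))
  calc p ≤ 1 + 1 := by rwa [one_add_one_eq_two]
    _ ≤ 1 + (p - 1)⁻¹ := by gcongr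

theorem Memℓp.continuousLinearMap_comp {ι 𝕜 E F : Type*} [NontriviallyNormedField 𝕜]
    [NormedAddCommGroup E] [NormedSpace 𝕜 E] [NormedAddCommGroup F] [NormedSpace 𝕜 F]
    {p : ℝ≥0∞} {f : ι → E} (hf : Memℓp f p) (T : E →L[𝕜] F) : Memℓp (fun j => T (f j)) p :=
  (hf.norm.const_mul ‖T‖).mono fun j => T.le_opNorm (f j)

theorem tsum_apply_neg_sub_eq_zero {ι 𝕜 X : Type*} [AddCommGroup ι] [RCLike 𝕜]
    (ω : X → X → 𝕜) (hω : ∀ x y, ω x y = -ω y x) (f : ι → X) (n : ι) :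
    ∑' j, ω (f (-j)) (f (j - n)) = 0 := by
  have h := (Equiv.subLeft n).tsum_eq fun j => ω (f (-j)) (f (j - n))
  simp only [Equiv.subLeft_apply, neg_sub, sub_sub_cancel_left, hω (f (_ - n)), tsum_neg] at h
  exact self_eq_neg.1 h.symm

theorem closure_span_ne_univ_of_ne_zero {R M M₂ : Type*} [Semiring R] [AddCommMonoid M]
    [TopologicalSpace M] [Module R M] [AddCommMonoid M₂] [TopologicalSpace M₂] [T1Space M₂]
    [Module R M₂] {L : M →L[R] M₂} (hL : L ≠ 0) {S : Set M} (hS : ∀ s ∈ S, L s = 0) :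
    closure (Submodule.span R S : Set M) ≠ Set.univ := by
  intro h
  refine hL (ContinuousLinearMap.ext fun x => ?_)
  have hker : closure (Submodule.span R S : Set M) ⊆ LinearMap.ker (L : M →ₗ[R] M₂) :=
    closure_minimal (Submodule.span_le.2 fun s hs => LinearMap.mem_ker.2 (hS s hs)) L.isClosed_ker
  exact hker (h ▸ Set.mem_univ x)

section AntisymmForm

variable {𝕜 X : Type*} [RCLike 𝕜] [NormedAddCommGroup X] [NormedSpace 𝕜 X]

theorem LinearIndependent.exists_dual_eq_zero_eq_one {v y : X}
    (h : LinearIndependent 𝕜 ![v, y]) : ∃ ψ : StrongDual 𝕜 X, ψ v = 0 ∧ ψ y = 1 := by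
  obtain ⟨ψ, hψ⟩ := (SeparatingDual.dualMap_surjective_iff (R := 𝕜) (V := X)).2
    (linearIndependent_iff_injective_fintypeLinearCombination.1 h) (LinearMap.proj 1)
  refine ⟨ψ, ?_, ?_⟩
  · simpa using LinearMap.congr_fun hψ (Pi.single 0 1)
  · simpa using LinearMap.congr_fun hψ (Pi.single 1 1)

theorem exists_antisymm_bilin_apply_ne_zero (hX : 1 < Module.rank 𝕜 X) {v : X} (hv : v ≠ 0) :
    ∃ ω : X →L[𝕜] X →L[𝕜] 𝕜, (∀ x y, ω x y = -ω y x) ∧ ∃ y, ω v y ≠ 0 := by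
  obtain ⟨y, hvy⟩ := exists_linearIndependent_pair_of_one_lt_rank hX hv
  obtain ⟨φ, hφ⟩ := SeparatingDual.exists_eq_one (R := 𝕜) hv
  obtain ⟨ψ, hψv, hψy⟩ := hvy.exists_dual_eq_zero_eq_one
  refine ⟨φ.smulRight ψ - ψ.smulRight φ, fun x z => ?_, y, ?_⟩
  · simp only [sub_apply, ContinuousLinearMap.smulRight_apply, smul_apply, smul_eq_mul]
    ring
  · simp [hφ, hψv, hψy]

end AntisymmForm

namespace lp

variable {𝕜 X ι : Type*} [RCLike 𝕜] [NormedAddCommGroup X] [NormedSpace 𝕜 X] [AddCommGroup ι]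
  {p : ℝ≥0∞} [Fact (1 ≤ p)]

/-- The value at `0` of the `ω`-convolution of `F` with `G`. -/
noncomputable def convAtZero (ω : X →L[𝕜] X →L[𝕜] 𝕜) (F : lp (fun _ : ι => X) p) (hp : p ≤ 2) :
    lp (fun _ : ι => X) p →L[𝕜] 𝕜 :=
  haveI : Fact (1 ≤ p.conjExponent) := ⟨HolderConjugate.one_le _ p⟩
  dualPairing p.conjExponent p (fun _ => ContinuousLinearMap.id 𝕜 (StrongDual 𝕜 X)) (K := 1)
    (fun _ => ContinuousLinearMap.norm_id_le)
    ⟨fun j => ω (F (-j)), (((lp.memℓp F).continuousLinearMap_comp ω).comp_equiv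
      (Equiv.neg ι)).of_exponent_ge (le_conjExponent_of_le_two hp)⟩

variable (ω : X →L[𝕜] X →L[𝕜] 𝕜) (F : lp (fun _ : ι => X) p) (hp : p ≤ 2)
include hp

theorem convAtZero_apply (G : lp (fun _ : ι => X) p) :
    convAtZero ω F hp G = ∑' j, ω (F (-j)) (G j) :=
  rfl

theorem convAtZero_single [DecidableEq ι] (j : ι) (y : X) :
    convAtZero ω F hp (lp.single p (-j) y) = ω (F j) y := by
  rw [convAtZero_apply, tsum_eq_single (-j) fun i hi => ?_]
  · simp
  · simp [Pi.single_eq_of_ne hi]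

theorem convAtZero_eq_zero_of_shift (hω : ∀ x y, ω x y = -ω y x) {G : lp (fun _ : ι => X) p}
    {n : ι} (hG : ∀ j, G j = F (j - n)) : convAtZero ω F hp G = 0 := by
  simp only [convAtZero_apply, hG]
  exact tsum_apply_neg_sub_eq_zero (fun x y => ω x y) hω F n

theorem exists_ne_zero_forall_shift_eq_zero (hX : 1 < Module.rank 𝕜 X) :
    ∃ L : lp (fun _ : ι => X) p →L[𝕜] 𝕜,
      L ≠ 0 ∧ ∀ (n : ι) (G : lp (fun _ : ι => X) p), (∀ j, G j = F (j - n)) → L G = 0 := by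
  classical
  by_cases hF : F = 0
  · subst hF
    have : Nontrivial X := rank_pos_iff_nontrivial.1 (zero_lt_one.trans hX)
    obtain ⟨x, hx⟩ := exists_ne (0 : X)
    have : Nontrivial (lp (fun _ : ι => X) p) :=
      ⟨lp.single p 0 x, 0, fun h => hx (by simpa using congrArg (· 0) h)⟩
    obtain ⟨L, hL⟩ := exists_ne (0 : lp (fun _ : ι => X) p →L[𝕜] 𝕜)
    refine ⟨L, hL, fun n G hG => ?_⟩
    rw [show G = 0 by ext j; simp [hG], map_zero]
  · obtain ⟨j, hj⟩ : ∃ j, F j ≠ 0 := by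
      by_contra! h
      exact hF (by ext j; simp [h])
    obtain ⟨ω, hω, y, hy⟩ := exists_antisymm_bilin_apply_ne_zero hX hj
    refine ⟨convAtZero ω F hp, fun h => hy ?_, fun n G => convAtZero_eq_zero_of_shift ω F hp hω⟩
    rw [← convAtZero_single ω F hp j y, h, zero_apply]

end lp

theorem closed_span_shifts_ne_top_vector_valued_general
    (p : ℝ≥0∞) [Fact (1 ≤ p)] (hp2 : p ≤ 2)
    (X : Type*) [NormedAddCommGroup X] [NormedSpace ℂ X]
    (hdim : 2 ≤ Module.rank ℂ X)
    (F : lp (fun _ : ℤ => X) p) :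
    closure (Submodule.span ℂ {G : lp (fun _ : ℤ => X) p |
        ∃ n : ℤ, ∀ j : ℤ, G j = F (j - n)} :
      Set (lp (fun _ : ℤ => X) p)) ≠ Set.univ := by
  obtain ⟨L, hL, hshift⟩ :=
    lp.exists_ne_zero_forall_shift_eq_zero F hp2 (Cardinal.one_lt_two.trans_le hdim)
  exact closure_span_ne_univ_of_ne_zero hL fun G ⟨n, hG⟩ => hshift n G hG

/-- Let `1 ≤ p ≤ 2`, let `X` be a complex Banach space of dimension at least
`2`, and let `F ∈ ℓ_p(ℤ; X)`.  Then the closed linear span of the shifts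
`{F^(n) : n ∈ ℤ}` is a proper subspace of `ℓ_p(ℤ; X)`. -/
theorem closed_span_shifts_ne_top_vector_valued
    (p : ℝ≥0∞) [Fact (1 ≤ p)] (hp : 1 ≤ p) (hp2 : p ≤ 2)
    (X : Type*) [NormedAddCommGroup X] [NormedSpace ℂ X] [CompleteSpace X]
    (hdim : 2 ≤ Module.rank ℂ X)
    (F : lp (fun _ : ℤ => X) p) :
    closure (Submodule.span ℂ {G : lp (fun _ : ℤ => X) p |
        ∃ n : ℤ, ∀ j : ℤ, G j = F (j - n)} :
      Set (lp (fun _ : ℤ => X) p)) ≠ Set.univ :=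
  closed_span_shifts_ne_top_vector_valued_general p hp2 X hdim F
end
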